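/- arXiv:quant-ph/0610031 — 5 statements merged into one kernel-verified Lean document; each statement's English description precedes it below -/
import Mathlib

section
/- Let W and W′ be normalized compatibility witnesses such that W′ is finer than W. Then for every positive tuple ρ, ⟨⟨W, ρ⟩⟩ < 0 implies ⟨⟨W, ρ⟩⟩ ≥ ⟨⟨W′, ρ⟩⟩. -/
open Matrix BigOperators
open scoped ComplexOrder

namespace Compat

noncomputable section

variable {n : ℕ} (d : Fin n → ℕ)

/-- The index type of the full tensor product `H = H_1 ⊗ ⋯ ⊗ H_n`,
where `H_i = ℂ^{d i}`; operators on `H` are matrices indexed by `Idx d`. -/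
abbrev Idx : Type := ∀ i, Fin (d i)

/-- The index type of the tensor product of the factors `H_i` with `i ∈ A`. -/
abbrev SubIdx (A : Finset (Fin n)) : Type := ∀ i : A, Fin (d i.1)

/-- Combine an assignment on `B` and one on `Bᶜ` into a full assignment. -/
def glue (B : Finset (Fin n)) (x : SubIdx d B) (z : SubIdx d Bᶜ) : Idx d :=
  fun i => if h : i ∈ B then x ⟨i, h⟩ else z ⟨i, Finset.mem_compl.mpr h⟩

/-- Partial trace keeping the factors in `B` (i.e. tracing out the factors in `Bᶜ`). -/
def reduce (B : Finset (Fin n)) (M : Matrix (Idx d) (Idx d) ℂ) :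
    Matrix (SubIdx d B) (SubIdx d B) ℂ :=
  fun x y => ∑ z : SubIdx d Bᶜ, M (glue d B x z) (glue d B y z)

/-- Place an operator acting on the factors in `B`, tensored with the identity
on the remaining factors, as an operator on the full space `H`. -/
def embed (B : Finset (Fin n)) (W : Matrix (SubIdx d B) (SubIdx d B) ℂ) :
    Matrix (Idx d) (Idx d) ℂ :=
  fun x y =>
    if ∀ i ∈ Bᶜ, x i = y i then W (fun i => x i.1) (fun i => y i.1) else 0

/-- Index type for `H^(i) = ⊗_{j ≠ i} H_j`. -/
abbrev RedIdx (i : Fin n) := SubIdx d ({i}ᶜ)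

/-- The space `O` of `n`-tuples of operators, the `i`-th acting on `H^(i)`. -/
abbrev Tuple := ∀ i : Fin n, Matrix (RedIdx d i) (RedIdx d i) ℂ

/-- Membership in (the Hermitian tuples space) `O`: every component is Hermitian. -/
def IsHermTuple (W : Tuple d) : Prop := ∀ i, (W i).IsHermitian

/-- A density state: positive semidefinite with trace one. -/
def IsDensity {m : Type*} [Fintype m] (M : Matrix m m ℂ) : Prop :=
  M.PosSemidef ∧ M.trace = 1

/-- The set `C`: a tuple `σ` lies in `C` iff there is a density state `ρ` on the
full space whose one-system partial traces are the `σ i`. -/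
def MemC (σ : Tuple d) : Prop :=
  ∃ ρ : Matrix (Idx d) (Idx d) ℂ, IsDensity ρ ∧ ∀ i, σ i = reduce d ({i}ᶜ) ρ

/-- The inner product `⟨⟨A,B⟩⟩ = Σ_i Tr(A_i B_i)` on `O` (a real number, since the
traces are real for Hermitian tuples). -/
def cwip (A B : Tuple d) : ℝ := (∑ i, ((A i) * (B i)).trace).re

/-- A compatibility witness: an element of `O` pairing nonnegatively with all of `C`. -/
def IsWitness (W : Tuple d) : Prop :=
  IsHermTuple d W ∧ ∀ ρ, MemC d ρ → 0 ≤ cwip d W ρ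

/-- `p(W) = Σ_i W_i ⊗ 1_i`. -/
def pW (W : Tuple d) : Matrix (Idx d) (Idx d) ℂ :=
  ∑ i, embed d ({i}ᶜ) (W i)

/-- `Δ(Z) = Σ_{A ⊊ N} (−1)^{|A|} (Tr_{N∖A} Z) ⊗ 1_{N∖A}`. -/
def Δop (Z : Matrix (Idx d) (Idx d) ℂ) : Matrix (Idx d) (Idx d) ℂ :=
  ∑ A ∈ Finset.univ.filter (fun A : Finset (Fin n) => A ≠ Finset.univ),
    ((-1 : ℂ) ^ A.card) • embed d A (reduce d A Z)

/-- The tensor product `T_1 ⊗ ⋯ ⊗ T_n` of one-system operators. -/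
def tensorAll (T : ∀ i, Matrix (Fin (d i)) (Fin (d i)) ℂ) :
    Matrix (Idx d) (Idx d) ℂ :=
  fun x y => ∏ i, T i (x i) (y i)

/-- Partial trace from the factors in `B` down to the factors in `B'` (for `B' ⊆ B`). -/
def reduceSub (B B' : Finset (Fin n)) (M : Matrix (SubIdx d B) (SubIdx d B) ℂ) :
    Matrix (SubIdx d B') (SubIdx d B') ℂ :=
  fun x y => ∑ z : SubIdx d (B \ B'),
    M (fun i => if h : i.1 ∈ B' then x ⟨i.1, h⟩ else z ⟨i.1, Finset.mem_sdiff.mpr ⟨i.2, h⟩⟩)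
      (fun i => if h : i.1 ∈ B' then y ⟨i.1, h⟩ else z ⟨i.1, Finset.mem_sdiff.mpr ⟨i.2, h⟩⟩)

/-- A tuple of subsystem states has consistent overlapping partial traces if
tracing the `j`-factor out of `σ_i` agrees with tracing the `i`-factor out of `σ_j`. -/
def HasConsistentTraces (σ : Tuple d) : Prop :=
  ∀ i j : Fin n, i ≠ j →
    reduceSub d ({i}ᶜ) ({i}ᶜ ∩ {j}ᶜ) (σ i) = reduceSub d ({j}ᶜ) ({i}ᶜ ∩ {j}ᶜ) (σ j)

/-- The tuple `I` of reduced states of the maximally mixed state `1_H / D`. -/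
def Itup : Tuple d :=
  fun i => ((d i : ℂ) / (∏ k, (d k : ℂ))) • (1 : Matrix (RedIdx d i) (RedIdx d i) ℂ)

/-- A positive tuple: all components positive semidefinite. -/
def PosTuple (σ : Tuple d) : Prop := ∀ i, (σ i).PosSemidef

/-- A normalized witness: `⟨⟨W, I⟩⟩ = 1` (equivalently `Tr p(W) = 1`). -/
def Normalized (W : Tuple d) : Prop := cwip d W (Itup d) = 1

/-- `W'` is finer than `W`. -/
def Finer (W' W : Tuple d) : Prop :=
  ∀ σ, PosTuple d σ → cwip d W σ < 0 → cwip d W' σ < 0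

/-- `λ(W, W') = inf_{σ ∈ D_W} |⟨⟨W',σ⟩⟩| / |⟨⟨W,σ⟩⟩|`. -/
def lam (W W' : Tuple d) : ℝ :=
  sInf {t | ∃ σ, PosTuple d σ ∧ cwip d W σ < 0 ∧ t = |cwip d W' σ| / |cwip d W σ|}

end
end Compat

open Matrix BigOperators
open scoped ComplexOrder


lemma psd_real_smul {m : Type*} [Fintype m] {M : Matrix m m ℂ} (hM : M.PosSemidef)
    {c : ℝ} (hc : 0 ≤ c) : (((c : ℂ)) • M).PosSemidef := by
  constructor
  · unfold Matrix.IsHermitian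
    rw [Matrix.conjTranspose_smul, hM.1.eq]
    simp [Complex.star_def, Complex.conj_ofReal]
  · intro x
    exact (hM.smul (Complex.zero_le_real.mpr hc)).2 x

lemma itup_psd {n : ℕ} (d : Fin n → ℕ) (i : Fin n) : (Compat.Itup d i).PosSemidef := by
  have : Compat.Itup d i
      = (((d i : ℝ) / (∏ k, (d k : ℝ)) : ℝ) : ℂ) • (1 : Matrix (Compat.RedIdx d i) (Compat.RedIdx d i) ℂ) := by
    unfold Compat.Itup
    push_cast
    rfl
  rw [this]
  exact psd_real_smul Matrix.PosSemidef.one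
    (div_nonneg (Nat.cast_nonneg _) (Finset.prod_nonneg fun k _ => Nat.cast_nonneg _))

lemma cwip_combo {n : ℕ} (d : Fin n → ℕ) (W σ τ : Compat.Tuple d) (s t : ℝ) :
    Compat.cwip d W (fun i => ((s : ℂ)) • σ i + ((t : ℂ)) • τ i)
      = s * Compat.cwip d W σ + t * Compat.cwip d W τ := by
  simp only [Compat.cwip, mul_add, Matrix.mul_smul, Matrix.trace_add, Matrix.trace_smul,
    smul_eq_mul, Finset.sum_add_distrib, ← Finset.mul_sum, Complex.add_re,
    Complex.re_ofReal_mul]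

/-- if `W'` is finer than `W` (both normalized witnesses), then for any
positive tuple `ρ`, `⟨⟨W,ρ⟩⟩ < 0` implies `⟨⟨W,ρ⟩⟩ ≥ ⟨⟨W',ρ⟩⟩`. -/
theorem finer_le_of_neg {n : ℕ} (d : Fin n → ℕ) (hn : 2 ≤ n) (hd : ∀ i, 1 ≤ d i)
    (W W' : Compat.Tuple d) (hW : Compat.IsWitness d W) (hW' : Compat.IsWitness d W')
    (hnW : Compat.Normalized d W) (hnW' : Compat.Normalized d W')
    (hfin : Compat.Finer d W' W)
    (ρ : Compat.Tuple d) (hρ : Compat.PosTuple d ρ) (hneg : Compat.cwip d W ρ < 0) :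
    Compat.cwip d W' ρ ≤ Compat.cwip d W ρ := by
  by_contra hcon
  push_neg at hcon
  set a := Compat.cwip d W ρ with ha
  set b := Compat.cwip d W' ρ with hb
  have h1a : (0:ℝ) < 1 - a := by linarith
  set tstar : ℝ := 1 / (1 - a) with hts
  have hts0 : 0 < tstar := by positivity
  have hts1 : tstar < 1 := by
    rw [hts, div_lt_one h1a]; linarith
  set u : ℝ := if b < 1 then min (1 / (1 - b)) 1 else 1 with hu
  have htu : tstar < u := by
    rw [hu]; split_ifs with hb1
    · refine lt_min ?_ hts1
      rw [hts]
      exact one_div_lt_one_div_of_lt (by linarith) (by linarith)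
    · exact hts1
  have hu1 : u ≤ 1 := by
    rw [hu]; split_ifs
    · exact min_le_right _ _
    · exact le_refl _
  set t : ℝ := (tstar + u) / 2 with htdef
  have ht1 : tstar < t := by rw [htdef]; linarith
  have ht2 : t < u := by rw [htdef]; linarith
  have ht0 : 0 < t := lt_trans hts0 ht1
  have htle1 : t < 1 := lt_of_lt_of_le ht2 hu1
  set σ : Compat.Tuple d :=
    fun i => (((1 - t : ℝ) : ℂ)) • Compat.Itup d i + ((t : ℝ) : ℂ) • ρ i with hσ
  have hpos : Compat.PosTuple d σ := fun i =>
    Matrix.PosSemidef.add (psd_real_smul (itup_psd d i) (by linarith))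
      (psd_real_smul (hρ i) (by linarith))
  have hval : Compat.cwip d W σ = (1 - t) * 1 + t * a := by
    rw [hσ, cwip_combo d W (Compat.Itup d) ρ (1 - t) t, hnW, ha]
  have hval' : Compat.cwip d W' σ = (1 - t) * 1 + t * b := by
    rw [hσ, cwip_combo d W' (Compat.Itup d) ρ (1 - t) t, hnW', hb]
  have hkey : tstar * (1 - a) = 1 := by
    rw [hts]; field_simp
  have hWσ : Compat.cwip d W σ < 0 := by
    rw [hval]
    nlinarith [mul_lt_mul_of_pos_right ht1 h1a]
  have hW'σ : Compat.cwip d W' σ < 0 := hfin σ hpos hWσ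
  rw [hval'] at hW'σ
  by_cases hb1 : b < 1
  · have htb : t < 1 / (1 - b) := lt_of_lt_of_le ht2 (by rw [hu, if_pos hb1]; exact min_le_left _ _)
    have h1b : (0:ℝ) < 1 - b := by linarith
    rw [lt_div_iff₀ h1b] at htb
    nlinarith
  · push_neg at hb1
    nlinarith
end

section
/- Let W and W′ be normalized compatibility witnesses such that W′ is finer than W and D_W ≠ ∅. Then for every positive tuple ρ with ⟨⟨W, ρ⟩⟩ > 0, one has λ(W, W′) · ⟨⟨W, ρ⟩⟩ ≥ ⟨⟨W′, ρ⟩⟩. -/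
open Matrix BigOperators
open scoped ComplexOrder

open Matrix BigOperators
open scoped ComplexOrder

lemma posSemidef_real_smul {m : Type*} [Fintype m] {M : Matrix m m ℂ}
    (hM : M.PosSemidef) {t : ℝ} (ht : 0 ≤ t) : ((t : ℂ) • M).PosSemidef := by
  rw [Matrix.posSemidef_iff_dotProduct_mulVec]
  constructor
  · unfold Matrix.IsHermitian
    rw [Matrix.conjTranspose_smul, hM.1.eq]
    norm_num
  · intro x
    rw [Matrix.smul_mulVec, dotProduct_smul, smul_eq_mul]
    exact mul_nonneg (by exact_mod_cast ht) (hM.dotProduct_mulVec_nonneg x)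

lemma cwip_add_smul {n : ℕ} (d : Fin n → ℕ) (W σ ρ : Compat.Tuple d) (t : ℝ) :
    Compat.cwip d W (fun i => σ i + (t : ℂ) • ρ i)
      = Compat.cwip d W σ + t * Compat.cwip d W ρ := by
  unfold Compat.cwip
  simp only [mul_add, Matrix.mul_smul, Matrix.trace_add, Matrix.trace_smul,
    Finset.sum_add_distrib, Complex.add_re, ← Finset.smul_sum, smul_eq_mul,
    Complex.mul_re, Complex.ofReal_re, Complex.ofReal_im]
  rw [← Finset.mul_sum, Complex.re_ofReal_mul]

/-- if `W'` is finer than `W` (both normalized witnesses) and `D_W ≠ ∅`,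
then for any positive tuple `ρ` with `⟨⟨W,ρ⟩⟩ > 0`,
`λ(W,W') ⟨⟨W,ρ⟩⟩ ≥ ⟨⟨W',ρ⟩⟩`. -/
theorem finer_lam_mul_ge {n : ℕ} (d : Fin n → ℕ) (hn : 2 ≤ n) (hd : ∀ i, 1 ≤ d i)
    (W W' : Compat.Tuple d) (hW : Compat.IsWitness d W) (hW' : Compat.IsWitness d W')
    (hnW : Compat.Normalized d W) (hnW' : Compat.Normalized d W')
    (hfin : Compat.Finer d W' W)
    (hDW : ∃ σ, Compat.PosTuple d σ ∧ Compat.cwip d W σ < 0)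
    (ρ : Compat.Tuple d) (hρ : Compat.PosTuple d ρ) (hpos : 0 < Compat.cwip d W ρ) :
    Compat.cwip d W' ρ ≤ Compat.lam d W W' * Compat.cwip d W ρ := by
  set p := Compat.cwip d W ρ with hp
  set q := Compat.cwip d W' ρ with hq
  have key : ∀ σ, Compat.PosTuple d σ → Compat.cwip d W σ < 0 →
      q / p ≤ |Compat.cwip d W' σ| / |Compat.cwip d W σ| := by
    intro σ hσ ha
    have hb : Compat.cwip d W' σ < 0 := hfin σ hσ ha
    set a := Compat.cwip d W σ
    set b := Compat.cwip d W' σ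
    have habs : |b| / |a| = (-b) / (-a) := by
      rw [abs_of_neg ha, abs_of_neg hb]
    rw [habs, div_le_div_iff₀ hpos (by linarith)]
    -- need q * (-a) ≤ (-b) * p, i.e. p * b ≤ a * q
    have claim : p * b ≤ a * q := by
      by_contra hcon
      push_neg at hcon
      rcases le_or_gt q 0 with hq0 | hq0
      · nlinarith
      · set t : ℝ := -b / q with htdef
        have ht0 : 0 ≤ t := div_nonneg (by linarith) hq0.le
        have hτpos : Compat.PosTuple d (fun i => σ i + (t : ℂ) • ρ i) :=
          fun i => (hσ i).add (posSemidef_real_smul (hρ i) ht0)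
        have hWτ : Compat.cwip d W (fun i => σ i + (t : ℂ) • ρ i) = a + t * p :=
          cwip_add_smul d W σ ρ t
        have hW'τ : Compat.cwip d W' (fun i => σ i + (t : ℂ) • ρ i) = b + t * q :=
          cwip_add_smul d W' σ ρ t
        have h1 : t * p < -a := by
          rw [htdef, div_mul_eq_mul_div, div_lt_iff₀ hq0]
          nlinarith
        have h2 := hfin _ hτpos (by rw [hWτ]; linarith)
        rw [hW'τ, htdef, div_mul_cancel₀ _ (ne_of_gt hq0)] at h2
        linarith
    nlinarith [claim]
  have hne : {t | ∃ σ, Compat.PosTuple d σ ∧ Compat.cwip d W σ < 0 ∧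
      t = |Compat.cwip d W' σ| / |Compat.cwip d W σ|}.Nonempty := by
    obtain ⟨σ0, h1, h2⟩ := hDW
    exact ⟨_, σ0, h1, h2, rfl⟩
  have hlow : q / p ≤ Compat.lam d W W' := by
    apply le_csInf hne
    rintro t ⟨σ, h1, h2, rfl⟩
    exact key σ h1 h2
  have h3 : q / p * p ≤ Compat.lam d W W' * p :=
    mul_le_mul_of_nonneg_right hlow (le_of_lt hpos)
  rwa [div_mul_cancel₀ _ (ne_of_gt hpos)] at h3
end

section
/- Let W and W′ be normalized compatibility witnesses such that W′ is finer than W and D_W ≠ ∅. Then λ(W, W′) ≥ 1, and λ(W, W′) = 1 if and only if W = W′. -/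
open Matrix BigOperators
open scoped ComplexOrder

namespace CompatAux

open Matrix BigOperators Compat
open scoped ComplexOrder

variable {n : ℕ} {d : Fin n → ℕ}

lemma psd_vecMulVec {m : Type*} [Fintype m] (x : m → ℂ) :
    (Matrix.vecMulVec x (star x)).PosSemidef := by
  refine Matrix.PosSemidef.of_dotProduct_mulVec_nonneg ?_ ?_
  · ext i j; simp [Matrix.vecMulVec_apply, Matrix.conjTranspose_apply, mul_comm]
  · intro y
    have h : star y ⬝ᵥ (Matrix.vecMulVec x (star x)) *ᵥ y
        = star (star x ⬝ᵥ y) * (star x ⬝ᵥ y) := by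
      simp only [dotProduct, Matrix.mulVec, Matrix.vecMulVec_apply, Pi.star_apply, star_sum,
        star_mul', star_star, Finset.mul_sum, Finset.sum_mul]
      rw [Finset.sum_comm]
      congr 1; ext i; congr 1; ext j; ring
    rw [h]; exact star_mul_self_nonneg _

lemma psd_real_smul {m : Type*} [Fintype m] {M : Matrix m m ℂ} (h : M.PosSemidef)
    {r : ℝ} (hr : 0 ≤ r) : ((r : ℂ) • M).PosSemidef := by
  refine Matrix.PosSemidef.of_dotProduct_mulVec_nonneg ?_ ?_
  · unfold Matrix.IsHermitian
    rw [Matrix.conjTranspose_smul, h.1.eq]; simp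
  · intro y
    rw [Matrix.smul_mulVec, dotProduct_smul, smul_eq_mul]
    exact mul_nonneg (by exact_mod_cast Complex.zero_le_real.mpr hr) (h.dotProduct_mulVec_nonneg y)

lemma psd_trace_nonneg {m : Type*} [Fintype m] [DecidableEq m] {M : Matrix m m ℂ}
    (h : M.PosSemidef) : 0 ≤ M.trace := by
  refine Finset.sum_nonneg fun i _ => ?_
  have := h.dotProduct_mulVec_nonneg (Pi.single i 1)
  simpa [dotProduct, Matrix.mulVec, Pi.single_apply] using this

lemma psd_trace_eq_zero {m : Type*} [Fintype m] [DecidableEq m] {M : Matrix m m ℂ}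
    (h : M.PosSemidef) (ht : M.trace = 0) : M = 0 := by
  have hnn : ∀ i, 0 ≤ M i i := by
    intro i
    have := h.dotProduct_mulVec_nonneg (Pi.single i 1)
    simpa [dotProduct, Matrix.mulVec, Pi.single_apply] using this
  have hdiag : ∀ i, M i i = 0 := fun i =>
    (Finset.sum_eq_zero_iff_of_nonneg (fun i _ => hnn i)).mp ht i (Finset.mem_univ i)
  ext i j
  have hcol : M *ᵥ (Pi.single j 1) = 0 := by
    rw [← h.dotProduct_mulVec_zero_iff]
    simpa [dotProduct, Matrix.mulVec, Pi.single_apply] using hdiag j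
  have := congrFun hcol i
  simpa [Matrix.mulVec, dotProduct, Pi.single_apply] using this

lemma trace_mul_vecMulVec {m : Type*} [Fintype m] (M : Matrix m m ℂ) (x : m → ℂ) :
    (M * Matrix.vecMulVec x (star x)).trace = star x ⬝ᵥ M *ᵥ x := by
  simp only [Matrix.trace, Matrix.diag, Matrix.mul_apply, Matrix.vecMulVec_apply, dotProduct,
    Matrix.mulVec, Pi.star_apply, Finset.mul_sum]
  congr 1; ext i; congr 1; ext j; ring

lemma herm_quadform_self_star {m : Type*} [Fintype m] {M : Matrix m m ℂ} (h : M.IsHermitian)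
    (x : m → ℂ) : star (star x ⬝ᵥ M *ᵥ x) = star x ⬝ᵥ M *ᵥ x := by
  conv_lhs => rw [star_dotProduct, star_star, star_mulVec, ← dotProduct_mulVec, h.eq]

lemma cwip_add (A B C : Compat.Tuple d) :
    Compat.cwip d A (fun i => B i + C i) = Compat.cwip d A B + Compat.cwip d A C := by
  unfold Compat.cwip
  rw [← Complex.add_re, ← Finset.sum_add_distrib]
  congr 1
  refine Finset.sum_congr rfl fun i _ => ?_
  rw [Matrix.mul_add, Matrix.trace_add]

lemma cwip_smul (A B : Compat.Tuple d) (r : ℝ) :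
    Compat.cwip d A (fun i => (r : ℂ) • B i) = r * Compat.cwip d A B := by
  unfold Compat.cwip
  have h : ∀ i ∈ Finset.univ, ((A i) * ((r : ℂ) • B i)).trace = (r : ℂ) * ((A i) * (B i)).trace := by
    intro i _
    rw [Matrix.mul_smul, Matrix.trace_smul, smul_eq_mul]
  rw [Finset.sum_congr rfl h, ← Finset.mul_sum]
  simp

lemma cwip_comb (A B C : Compat.Tuple d) (u v : ℝ) :
    Compat.cwip d A (fun i => (u : ℂ) • B i + (v : ℂ) • C i)
      = u * Compat.cwip d A B + v * Compat.cwip d A C := by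
  rw [cwip_add A (fun i => (u : ℂ) • B i) (fun i => (v : ℂ) • C i), cwip_smul, cwip_smul]

lemma itup_posTuple : Compat.PosTuple d (Compat.Itup d) := by
  intro i
  have h : ((d i : ℂ) / (∏ k, (d k : ℂ))) = (((d i : ℝ) / (∏ k, (d k : ℝ)) : ℝ) : ℂ) := by
    push_cast; ring
  rw [Compat.Itup]
  rw [h]
  exact psd_real_smul Matrix.PosSemidef.one
    (div_nonneg (Nat.cast_nonneg _) (Finset.prod_nonneg fun k _ => Nat.cast_nonneg _))

/-- positive tuples are closed under the needed combos -/
lemma posTuple_comb {σ τ : Compat.Tuple d} (hσ : Compat.PosTuple d σ) (hτ : Compat.PosTuple d τ)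
    {u v : ℝ} (hu : 0 ≤ u) (hv : 0 ≤ v) :
    Compat.PosTuple d (fun i => (u : ℂ) • σ i + (v : ℂ) • τ i) := fun i =>
  (psd_real_smul (hσ i) hu).add (psd_real_smul (hτ i) hv)

/-- Key inequality: for σ in D_W, ⟨⟨W',σ⟩⟩ ≤ ⟨⟨W,σ⟩⟩. -/
lemma key_ineq {W W' : Compat.Tuple d}
    (hnW : Compat.Normalized d W)
    (hnW' : Compat.Normalized d W') (hfin : Compat.Finer d W' W)
    {σ : Compat.Tuple d} (hσ : Compat.PosTuple d σ) (ha : Compat.cwip d W σ < 0) :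
    Compat.cwip d W' σ ≤ Compat.cwip d W σ := by
  set a := Compat.cwip d W σ with hadef
  set a' := Compat.cwip d W' σ with ha'def
  have ha' : a' < 0 := hfin σ hσ ha
  have hden : (0:ℝ) < 1 - a' := by linarith
  set u : ℝ := 1 / (1 - a') with hu
  set v : ℝ := -a' / (1 - a') with hv
  have hu0 : 0 ≤ u := by positivity
  have hv0 : 0 ≤ v := by
    apply div_nonneg <;> linarith
  set τ : Compat.Tuple d := fun i => (u : ℂ) • σ i + (v : ℂ) • Compat.Itup d i with hτ
  have hτpos : Compat.PosTuple d τ := posTuple_comb hσ itup_posTuple hu0 hv0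
  have hcw' : Compat.cwip d W' τ = 0 := by
    rw [hτ, cwip_add, cwip_smul, cwip_smul, hnW', ← ha'def]
    rw [hu, hv]; field_simp; ring
  have hge : 0 ≤ Compat.cwip d W τ := by
    by_contra hlt
    push_neg at hlt
    have := hfin τ hτpos hlt
    rw [hcw'] at this
    exact lt_irrefl _ this
  have hcw : Compat.cwip d W τ = u * a + v := by
    rw [hτ, cwip_add, cwip_smul, cwip_smul, hnW, ← hadef]
    ring
  rw [hcw] at hge
  have huv : v = -a' * u := by rw [hu, hv]; field_simp
  have hupos : 0 < u := by rw [hu]; positivity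
  nlinarith [hge, huv, hupos]

end CompatAux

open Matrix BigOperators
open scoped ComplexOrder

set_option maxHeartbeats 2000000 in
/-- if `W'` is finer than `W` (both normalized witnesses) and `D_W ≠ ∅`,
then `λ(W,W') ≥ 1`, with equality iff `W = W'`. -/
theorem finer_lam_ge_one {n : ℕ} (d : Fin n → ℕ) (hn : 2 ≤ n) (hd : ∀ i, 1 ≤ d i)
    (W W' : Compat.Tuple d) (hW : Compat.IsWitness d W) (hW' : Compat.IsWitness d W')
    (hnW : Compat.Normalized d W) (hnW' : Compat.Normalized d W')
    (hfin : Compat.Finer d W' W)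
    (hDW : ∃ σ, Compat.PosTuple d σ ∧ Compat.cwip d W σ < 0) :
    1 ≤ Compat.lam d W W' ∧ (Compat.lam d W W' = 1 ↔ W = W') := by
  classical
  set S : Set ℝ :=
    {t | ∃ σ, Compat.PosTuple d σ ∧ Compat.cwip d W σ < 0 ∧
      t = |Compat.cwip d W' σ| / |Compat.cwip d W σ|} with hS
  have hlam : Compat.lam d W W' = sInf S := rfl
  obtain ⟨σ₀, hσ₀, ha₀⟩ := hDW
  have hSne : S.Nonempty := ⟨_, σ₀, hσ₀, ha₀, rfl⟩
  have hmem : ∀ t ∈ S, 1 ≤ t := by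
    rintro t ⟨σ, hσ, ha, rfl⟩
    have hk := CompatAux.key_ineq hnW hnW' hfin hσ ha
    have ha' : Compat.cwip d W' σ < 0 := hfin σ hσ ha
    rw [abs_of_neg ha', abs_of_neg ha, le_div_iff₀ (by linarith)]
    linarith
  have h1 : 1 ≤ Compat.lam d W W' := by
    rw [hlam]; exact le_csInf hSne hmem
  refine ⟨h1, ?_, ?_⟩
  · -- lam = 1 → W = W'
    intro hlam1
    have hC : ∀ τ, Compat.PosTuple d τ → Compat.cwip d W' τ ≤ Compat.cwip d W τ := by
      intro τ hτ
      set c : ℝ := Compat.cwip d W τ with hc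
      set c' : ℝ := Compat.cwip d W' τ with hc'
      clear_value c c'
      have hcpos : (0:ℝ) < |c| + 1 := by positivity
      have hkey : ∀ η : ℝ, 0 < η → c' - c ≤ 2 * (|c| + 1) * η := by
        intro η hη
        obtain ⟨t, htS, htlt⟩ := Real.lt_sInf_add_pos hSne hη
        rw [← hlam, hlam1] at htlt
        obtain ⟨σ, hσ, ha, rfl⟩ := htS
        have hk := CompatAux.key_ineq hnW hnW' hfin hσ ha
        have ha' : Compat.cwip d W' σ < 0 := hfin σ hσ ha
        set a : ℝ := Compat.cwip d W σ with hadef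
        set a' : ℝ := Compat.cwip d W' σ with ha'def
        clear_value a a'
        rw [abs_of_neg ha', abs_of_neg ha, div_lt_iff₀ (by linarith)] at htlt
        have hδ : a - a' < η * (-a) := by nlinarith
        set ε : ℝ := (-a) / (2 * (|c| + 1)) with hε
        clear_value ε
        have hεpos : 0 < ε := by
          rw [hε]; apply div_pos (by linarith) (by positivity)
        have hεeq : ε * (2 * (|c| + 1)) = -a := by
          rw [hε]; field_simp
        set ρ : Compat.Tuple d := fun i => ((1:ℝ) : ℂ) • σ i + ((ε:ℝ) : ℂ) • τ i with hρ
        clear_value ρ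
        have hρpos : Compat.PosTuple d ρ := by
          rw [hρ]; exact CompatAux.posTuple_comb hσ hτ zero_le_one hεpos.le
        have hρW : Compat.cwip d W ρ = 1 * a + ε * c := by
          rw [hρ, CompatAux.cwip_comb, ← hadef, ← hc]
        have hρW' : Compat.cwip d W' ρ = 1 * a' + ε * c' := by
          rw [hρ, CompatAux.cwip_comb, ← ha'def, ← hc']
        have habs : ε * c ≤ ε * |c| := mul_le_mul_of_nonneg_left (le_abs_self c) hεpos.le
        have hρneg : Compat.cwip d W ρ < 0 := by
          rw [hρW]; nlinarith
        have hk2 := CompatAux.key_ineq hnW hnW' hfin hρpos hρneg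
        rw [hρW, hρW'] at hk2
        nlinarith
      by_contra hlt
      push_neg at hlt
      have h2 := hkey ((c' - c) / (4 * (|c| + 1))) (div_pos (by linarith) (by positivity))
      have h3 : 2 * (|c| + 1) * ((c' - c) / (4 * (|c| + 1))) = (c' - c) / 2 := by
        field_simp; ring
      rw [h3] at h2
      linarith
    have hPSD : ∀ i, (W i - W' i).PosSemidef := by
      intro i
      have hherm : (W i - W' i).IsHermitian := (hW.1 i).sub (hW'.1 i)
      refine Matrix.PosSemidef.of_dotProduct_mulVec_nonneg hherm fun x => ?_
      set P := Matrix.vecMulVec x (star x) with hP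
      set τ : Compat.Tuple d := Function.update (0 : Compat.Tuple d) i P with hτ
      have hτpos : Compat.PosTuple d τ := by
        intro j
        by_cases hj : j = i
        · subst hj; rw [hτ, Function.update_self]; exact CompatAux.psd_vecMulVec x
        · rw [hτ, Function.update_of_ne hj]; exact Matrix.PosSemidef.zero
      have hval : ∀ A : Compat.Tuple d, Compat.cwip d A τ = ((A i * P).trace).re := by
        intro A
        unfold Compat.cwip
        have h0 : ∀ j ∈ Finset.univ, j ≠ i → ((A j) * (τ j)).trace = 0 := by
          intro j _ hj
          rw [hτ, Function.update_of_ne hj]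
          simp
        rw [Finset.sum_eq_single_of_mem i (Finset.mem_univ i) h0, hτ, Function.update_self]
      have hle := hC τ hτpos
      rw [hval W, hval W'] at hle
      have hre : 0 ≤ (((W i - W' i) * P).trace).re := by
        rw [Matrix.sub_mul, Matrix.trace_sub, Complex.sub_re]
        linarith
      rw [hP, CompatAux.trace_mul_vecMulVec] at hre
      have hstar := CompatAux.herm_quadform_self_star hherm x
      have him : (star x ⬝ᵥ (W i - W' i) *ᵥ x).im = 0 := by
        have := congrArg Complex.im hstar
        simp only [Complex.star_def, Complex.conj_im] at this
        linarith
      rw [Complex.le_def]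
      exact ⟨by simpa using hre, by simp [him]⟩
    have htr : ∀ A : Compat.Tuple d, Compat.cwip d A (Compat.Itup d) =
        ∑ i, ((d i : ℝ) / (∏ k, (d k : ℝ))) * ((A i).trace).re := by
      intro A
      unfold Compat.cwip Compat.Itup
      have hterm : ∀ i ∈ Finset.univ,
          ((A i) * (((d i : ℂ) / (∏ k, (d k : ℂ))) •
            (1 : Matrix (Compat.RedIdx d i) (Compat.RedIdx d i) ℂ))).trace
          = (((d i : ℝ) / (∏ k, (d k : ℝ)) : ℝ) : ℂ) * ((A i).trace) := by
        intro i _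
        rw [Matrix.mul_smul, Matrix.mul_one, Matrix.trace_smul, smul_eq_mul]
        congr 1
        push_cast
        ring
      rw [Finset.sum_congr rfl hterm, Complex.re_sum]
      refine Finset.sum_congr rfl fun i _ => ?_
      exact Complex.re_ofReal_mul _ _
    have hw : ∀ i : Fin n, (0:ℝ) < (d i : ℝ) / (∏ k, (d k : ℝ)) := by
      intro i
      apply div_pos
      · exact_mod_cast Nat.lt_of_lt_of_le Nat.zero_lt_one (hd i)
      · apply Finset.prod_pos
        intro k _
        exact_mod_cast Nat.lt_of_lt_of_le Nat.zero_lt_one (hd k)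
    have hnn : ∀ i : Fin n, (0:ℝ) ≤ (((W i - W' i)).trace).re := by
      intro i
      have := CompatAux.psd_trace_nonneg (hPSD i)
      rw [Complex.le_def] at this
      simpa using this.1
    have hsum : ∑ i, ((d i : ℝ) / (∏ k, (d k : ℝ))) * (((W i - W' i)).trace).re = 0 := by
      have e1 := htr W
      have e2 := htr W'
      rw [hnW] at e1
      rw [hnW'] at e2
      have e3 : ∑ i, ((d i : ℝ) / (∏ k, (d k : ℝ))) * ((W i).trace).re
          - ∑ i, ((d i : ℝ) / (∏ k, (d k : ℝ))) * ((W' i).trace).re = 0 := by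
        rw [← e1, ← e2]; ring
      rw [← Finset.sum_sub_distrib] at e3
      rw [← e3]
      refine Finset.sum_congr rfl fun i _ => ?_
      rw [Matrix.trace_sub, Complex.sub_re]
      ring
    have hzero : ∀ i ∈ Finset.univ, ((d i : ℝ) / (∏ k, (d k : ℝ))) * (((W i - W' i)).trace).re = 0 :=
      (Finset.sum_eq_zero_iff_of_nonneg
        (fun i _ => mul_nonneg (hw i).le (hnn i))).mp hsum
    funext i
    have hri : (((W i - W' i)).trace).re = 0 := by
      have := hzero i (Finset.mem_univ i)
      exact (mul_eq_zero.mp this).resolve_left (ne_of_gt (hw i))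
    have himtr : (((W i - W' i)).trace).im = 0 := by
      have := CompatAux.psd_trace_nonneg (hPSD i)
      rw [Complex.le_def] at this
      simpa using this.2.symm
    have htr0 : ((W i - W' i)).trace = 0 := Complex.ext hri himtr
    have := CompatAux.psd_trace_eq_zero (hPSD i) htr0
    exact sub_eq_zero.mp this
  · -- W = W' → lam = 1
    intro hWW'
    subst hWW'
    refine le_antisymm ?_ h1
    rw [hlam]
    apply csInf_le ⟨1, fun t ht => hmem t ht⟩
    exact ⟨σ₀, hσ₀, ha₀, (div_self (abs_ne_zero.mpr (ne_of_lt ha₀))).symm⟩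
end

section
/- Let σ = (σ_1, …, σ_n) be a tuple of density states (σ_i a density state on H^(i)) with consistent overlapping partial traces, and for A ⊊ N let σ_A denote the common reduced state on ⊗_{i∈A} H_i obtained by partially tracing any σ_j with j ∉ A (with σ_∅ = 1 as a scalar); set Δ(σ) = Σ_{A ⊊ N} (−1)^{|A|} σ_A ⊗ 1_{N∖A}, an operator on H. If Δ(σ) is positive semidefinite, then ⟨⟨W, σ⟩⟩ ≥ 0 for every compatibility witness W such that p(W) = Δ(Z) for some positive semidefinite operator Z on H. -/
open Matrix BigOperators
open scoped ComplexOrder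

namespace CompatProof
open Compat Finset

variable {n : ℕ} (d : Fin n → ℕ)

noncomputable section

/-- product of dimensions over a finset, as a complex number -/
def Qp (S : Finset (Fin n)) : ℂ := ∏ i ∈ S, (d i : ℂ)

lemma glue_restr {B : Finset (Fin n)} (u : SubIdx d B) (z : SubIdx d Bᶜ) :
    (fun i : ↥B => glue d B u z i.1) = u :=
  funext fun i => dif_pos i.2

lemma glue_restr_compl {B : Finset (Fin n)} (u : SubIdx d B) (z : SubIdx d Bᶜ) :
    (fun i : ↥(Bᶜ) => glue d B u z i.1) = z :=
  funext fun i => dif_neg (Finset.mem_compl.mp i.2)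

def glueEquiv (B : Finset (Fin n)) : (SubIdx d B × SubIdx d Bᶜ) ≃ Idx d where
  toFun p := glue d B p.1 p.2
  invFun x := (fun i => x i.1, fun i => x i.1)
  left_inv p := Prod.ext (glue_restr d p.1 p.2) (glue_restr_compl d p.1 p.2)
  right_inv x := by
    funext i
    by_cases h : i ∈ B
    · exact dif_pos h
    · exact dif_neg h

lemma sum_glue (B : Finset (Fin n)) (f : Idx d → ℂ) :
    ∑ x : Idx d, f x = ∑ u : SubIdx d B, ∑ z : SubIdx d Bᶜ, f (glue d B u z) := by
  rw [← Equiv.sum_comp (glueEquiv d B) f, Fintype.sum_prod_type]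
  rfl

/-- split equiv for subindex types -/
def seEquiv (P Q R : Finset (Fin n)) (hPR : P ⊆ R) (hQR : Q ⊆ R)
    (hcov : ∀ i ∈ R, i ∈ P ∨ i ∈ Q) (hdis : ∀ i, i ∈ P → i ∉ Q) :
    (SubIdx d P × SubIdx d Q) ≃ SubIdx d R where
  toFun p i := if h : i.1 ∈ P then p.1 ⟨i.1, h⟩ else p.2 ⟨i.1, (hcov i.1 i.2).resolve_left h⟩
  invFun u := (fun i => u ⟨i.1, hPR i.2⟩, fun i => u ⟨i.1, hQR i.2⟩)
  left_inv p := by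
    refine Prod.ext (funext fun i => ?_) (funext fun i => ?_)
    · exact dif_pos i.2
    · exact dif_neg (fun h => hdis i.1 h i.2)
  right_inv u := by
    funext i
    dsimp only
    split <;> rfl

lemma sum_se {P Q R : Finset (Fin n)} (hPR : P ⊆ R) (hQR : Q ⊆ R)
    (hcov : ∀ i ∈ R, i ∈ P ∨ i ∈ Q) (hdis : ∀ i, i ∈ P → i ∉ Q)
    (f : SubIdx d R → ℂ) :
    ∑ w : SubIdx d R, f w
      = ∑ p : SubIdx d P, ∑ q : SubIdx d Q, f (seEquiv d P Q R hPR hQR hcov hdis (p, q)) := by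
  rw [← Equiv.sum_comp (seEquiv d P Q R hPR hQR hcov hdis) f, Fintype.sum_prod_type]

lemma card_subIdx (S : Finset (Fin n)) : (Fintype.card (SubIdx d S) : ℂ) = Qp d S := by
  rw [Fintype.card_pi]
  push_cast
  rw [Qp, ← Finset.prod_coe_sort S (fun i => (d i : ℂ))]
  simp [Fintype.card_fin]

end
end CompatProof

namespace CompatProof
open Compat Finset
variable {n : ℕ} (d : Fin n → ℕ)
noncomputable section

lemma glue_not_mem {B : Finset (Fin n)} (u : SubIdx d B) (z : SubIdx d Bᶜ) {i : Fin n}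
    (h : i ∉ B) : glue d B u z i = z ⟨i, Finset.mem_compl.mpr h⟩ := dif_neg h

lemma embed_glue {B : Finset (Fin n)} (M : Matrix (SubIdx d B) (SubIdx d B) ℂ)
    (u v : SubIdx d B) (z z' : SubIdx d Bᶜ) :
    embed d B M (glue d B u z) (glue d B v z') = if z = z' then M u v else 0 := by
  unfold embed
  by_cases h : z = z'
  · subst h
    have hcond : ∀ i ∈ Bᶜ, glue d B u z i = glue d B v z i := by
      intro i hi
      rw [glue_not_mem d u z (Finset.mem_compl.mp hi),
        glue_not_mem d v z (Finset.mem_compl.mp hi)]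
    rw [if_pos hcond, if_pos rfl, glue_restr, glue_restr]
  · have hcond : ¬ ∀ i ∈ Bᶜ, glue d B u z i = glue d B v z' i := by
      intro hc
      apply h
      funext i
      have := hc i.1 i.2
      rwa [glue_not_mem d u z (Finset.mem_compl.mp i.2),
        glue_not_mem d v z' (Finset.mem_compl.mp i.2)] at this
    rw [if_neg hcond, if_neg h]

lemma trace_embed_mul {B : Finset (Fin n)} (M : Matrix (SubIdx d B) (SubIdx d B) ℂ)
    (X : Matrix (Idx d) (Idx d) ℂ) :
    (embed d B M * X).trace = (M * reduce d B X).trace := by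
  rw [Matrix.trace, Matrix.trace]
  simp only [Matrix.diag_apply, Matrix.mul_apply]
  calc
    ∑ x : Idx d, ∑ y : Idx d, embed d B M x y * X y x
        = ∑ u : SubIdx d B, ∑ z : SubIdx d Bᶜ, ∑ y : Idx d,
            embed d B M (glue d B u z) y * X y (glue d B u z) := by
          rw [sum_glue d B]
    _ = ∑ u : SubIdx d B, ∑ z : SubIdx d Bᶜ, ∑ v : SubIdx d B, ∑ z' : SubIdx d Bᶜ,
            embed d B M (glue d B u z) (glue d B v z')
              * X (glue d B v z') (glue d B u z) := by
          refine Finset.sum_congr rfl fun u _ => Finset.sum_congr rfl fun z _ => ?_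
          rw [sum_glue d B]
    _ = ∑ u : SubIdx d B, ∑ z : SubIdx d Bᶜ, ∑ v : SubIdx d B,
            M u v * X (glue d B v z) (glue d B u z) := by
          refine Finset.sum_congr rfl fun u _ => Finset.sum_congr rfl fun z _ =>
            Finset.sum_congr rfl fun v _ => ?_
          simp only [embed_glue, ite_mul, zero_mul, Finset.sum_ite_eq, Finset.mem_univ,
            if_true]
    _ = ∑ u : SubIdx d B, ∑ v : SubIdx d B, M u v * reduce d B X v u := by
          refine Finset.sum_congr rfl fun u _ => ?_
          rw [Finset.sum_comm]
          refine Finset.sum_congr rfl fun v _ => ?_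
          rw [← Finset.mul_sum]
          rfl

lemma reduceSub_self {B : Finset (Fin n)} (M : Matrix (SubIdx d B) (SubIdx d B) ℂ) :
    reduceSub d B B M = M := by
  funext x y
  rw [reduceSub]
  have he : IsEmpty (↥(B \ B)) := by
    rw [Finset.isEmpty_coe_sort, Finset.sdiff_self]
  have hcard : Fintype.card (SubIdx d (B \ B)) = 1 := by
    haveI := he
    rw [Fintype.card_pi, Finset.univ_eq_empty, Finset.prod_empty]
  calc
    (∑ z : SubIdx d (B \ B), M
        (fun i => if h : i.1 ∈ B then x ⟨i.1, h⟩ else z ⟨i.1, Finset.mem_sdiff.mpr ⟨i.2, h⟩⟩)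
        (fun i => if h : i.1 ∈ B then y ⟨i.1, h⟩ else z ⟨i.1, Finset.mem_sdiff.mpr ⟨i.2, h⟩⟩))
        = ∑ _z : SubIdx d (B \ B), M x y := by
          refine Finset.sum_congr rfl fun z _ => ?_
          congr 1 <;> exact funext fun i => dif_pos i.2
    _ = M x y := by
          rw [Finset.sum_const, Finset.card_univ, hcard, one_smul]

lemma reduceSub_comp {B B' C : Finset (Fin n)} (hCB' : C ⊆ B') (hB'B : B' ⊆ B)
    (M : Matrix (SubIdx d B) (SubIdx d B) ℂ) :
    reduceSub d B' C (reduceSub d B B' M) = reduceSub d B C M := by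
  have hPR : B' \ C ⊆ B \ C := Finset.sdiff_subset_sdiff hB'B (Finset.Subset.refl C)
  have hQR : B \ B' ⊆ B \ C := Finset.sdiff_subset_sdiff (Finset.Subset.refl B) hCB'
  have hcov : ∀ i ∈ B \ C, i ∈ B' \ C ∨ i ∈ B \ B' := by
    intro i hi
    simp only [Finset.mem_sdiff] at *
    tauto
  have hdis : ∀ i, i ∈ B' \ C → i ∉ B \ B' := by
    intro i hi hj
    simp only [Finset.mem_sdiff] at *
    tauto
  funext x y
  show _ = ∑ w : SubIdx d (B \ C), _
  rw [sum_se d hPR hQR hcov hdis]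
  simp only [reduceSub]
  refine Finset.sum_congr rfl fun p _ => Finset.sum_congr rfl fun q _ => ?_
  congr 1 <;> funext i <;>
  · by_cases h1 : i.1 ∈ C
    · have h2 : i.1 ∈ B' := hCB' h1
      simp only [seEquiv, Equiv.coe_fn_mk, h1, h2, dif_pos]
    · by_cases h2 : i.1 ∈ B'
      · have h3 : i.1 ∈ B' \ C := Finset.mem_sdiff.mpr ⟨h2, h1⟩
        simp only [seEquiv, Equiv.coe_fn_mk, h1, h2, h3, dif_pos, dif_neg, not_false_iff]
      · have h3 : i.1 ∉ B' \ C := fun hc => h2 (Finset.mem_sdiff.mp hc).1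
        simp only [seEquiv, Equiv.coe_fn_mk, h1, h2, h3, dif_neg, not_false_iff]

end
end CompatProof
namespace CompatProof
open Compat Finset
variable {n : ℕ} (d : Fin n → ℕ)
noncomputable section

lemma glue_mem {B : Finset (Fin n)} (u : SubIdx d B) (z : SubIdx d Bᶜ) {i : Fin n}
    (h : i ∈ B) : glue d B u z i = u ⟨i, h⟩ := dif_pos h

lemma trace_embed_embed {A B : Finset (Fin n)}
    (T : Matrix (SubIdx d A) (SubIdx d A) ℂ) (M : Matrix (SubIdx d B) (SubIdx d B) ℂ) :
    (embed d A T * embed d B M).trace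
      = Qp d ((A ∪ B)ᶜ)
          * (reduceSub d A (A ∩ B) T * reduceSub d B (A ∩ B) M).trace := by
  have hAC : A ∩ B ⊆ A := Finset.inter_subset_left
  have hBC : A ∩ B ⊆ B := Finset.inter_subset_right
  set C := A ∩ B with hC
  -- pointwise key lemma
  have key : ∀ (p q : SubIdx d C) (s t : SubIdx d Cᶜ),
      embed d A T (glue d C p s) (glue d C q t) * embed d B M (glue d C q t) (glue d C p s)
        = if s = t then
            T (fun i : ↥A => glue d C p s i.1) (fun i : ↥A => glue d C q s i.1)
              * M (fun i : ↥B => glue d C q s i.1) (fun i : ↥B => glue d C p s i.1)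
          else 0 := by
    intro p q s t
    by_cases hst : s = t
    · subst hst
      rw [if_pos rfl]
      have hA : ∀ i ∈ Aᶜ, glue d C p s i = glue d C q s i := by
        intro i hi
        have hiC : i ∉ C := fun h => (Finset.mem_compl.mp hi) (hAC h)
        rw [glue_not_mem d p s hiC, glue_not_mem d q s hiC]
      have hB : ∀ i ∈ Bᶜ, glue d C q s i = glue d C p s i := by
        intro i hi
        have hiC : i ∉ C := fun h => (Finset.mem_compl.mp hi) (hBC h)
        rw [glue_not_mem d p s hiC, glue_not_mem d q s hiC]
      show (if _ then _ else _) * (if _ then _ else _) = _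
      rw [if_pos hA, if_pos hB]
    · rw [if_neg hst]
      show (if _ then _ else _) * (if _ then _ else _) = (0 : ℂ)
      by_cases hA : ∀ i ∈ Aᶜ, glue d C p s i = glue d C q t i
      · have hB : ¬ ∀ i ∈ Bᶜ, glue d C q t i = glue d C p s i := by
          intro hB
          apply hst
          funext i
          have hiC : i.1 ∉ C := Finset.mem_compl.mp i.2
          by_cases hiA : i.1 ∈ A
          · have hiB : i.1 ∉ B := fun h => hiC (Finset.mem_inter.mpr ⟨hiA, h⟩)
            have := hB i.1 (Finset.mem_compl.mpr hiB)
            rw [glue_not_mem d q t hiC, glue_not_mem d p s hiC] at this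
            exact this.symm
          · have := hA i.1 (Finset.mem_compl.mpr hiA)
            rwa [glue_not_mem d p s hiC, glue_not_mem d q t hiC] at this
        rw [if_neg hB, mul_zero]
      · rw [if_neg hA, zero_mul]
  -- subset facts for the two splittings
  have h1PR : A \ C ⊆ Cᶜ := fun i hi => Finset.mem_compl.mpr (Finset.mem_sdiff.mp hi).2
  have h1QR : Aᶜ ⊆ Cᶜ := fun i hi =>
    Finset.mem_compl.mpr (fun h => (Finset.mem_compl.mp hi) (hAC h))
  have h1cov : ∀ i ∈ Cᶜ, i ∈ A \ C ∨ i ∈ Aᶜ := by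
    intro i hi
    by_cases hiA : i ∈ A
    · exact Or.inl (Finset.mem_sdiff.mpr ⟨hiA, Finset.mem_compl.mp hi⟩)
    · exact Or.inr (Finset.mem_compl.mpr hiA)
  have h1dis : ∀ i, i ∈ A \ C → i ∉ Aᶜ := fun i hi hj =>
    (Finset.mem_compl.mp hj) (Finset.mem_sdiff.mp hi).1
  have h2PR : B \ C ⊆ Aᶜ := fun i hi =>
    Finset.mem_compl.mpr (fun hA =>
      (Finset.mem_sdiff.mp hi).2 (Finset.mem_inter.mpr ⟨hA, (Finset.mem_sdiff.mp hi).1⟩))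
  have h2QR : (A ∪ B)ᶜ ⊆ Aᶜ := fun i hi =>
    Finset.mem_compl.mpr (fun hA => (Finset.mem_compl.mp hi) (Finset.mem_union_left _ hA))
  have h2cov : ∀ i ∈ Aᶜ, i ∈ B \ C ∨ i ∈ (A ∪ B)ᶜ := by
    intro i hi
    by_cases hiB : i ∈ B
    · exact Or.inl (Finset.mem_sdiff.mpr ⟨hiB, fun h => (Finset.mem_compl.mp hi) (hAC h)⟩)
    · exact Or.inr (Finset.mem_compl.mpr (fun hu =>
        (Finset.mem_union.mp hu).elim (Finset.mem_compl.mp hi) hiB))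
  have h2dis : ∀ i, i ∈ B \ C → i ∉ (A ∪ B)ᶜ := fun i hi hj =>
    (Finset.mem_compl.mp hj) (Finset.mem_union_right _ (Finset.mem_sdiff.mp hi).1)
  set se1 := seEquiv d (A \ C) (Aᶜ) (Cᶜ) h1PR h1QR h1cov h1dis with hse1
  set se2 := seEquiv d (B \ C) ((A ∪ B)ᶜ) (Aᶜ) h2PR h2QR h2cov h2dis with hse2
  -- the two argument computations
  have argT : ∀ (p : SubIdx d C) (a : SubIdx d (A \ C)) (b : SubIdx d (B \ C))
      (c : SubIdx d ((A ∪ B)ᶜ)),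
      (fun i : ↥A => glue d C p (se1 (a, se2 (b, c))) i.1)
        = (fun i : ↥A => if h : i.1 ∈ C then p ⟨i.1, h⟩
            else a ⟨i.1, Finset.mem_sdiff.mpr ⟨i.2, h⟩⟩) := by
    intro p a b c
    funext i
    by_cases h : i.1 ∈ C
    · rw [glue_mem d p _ h, dif_pos h]
    · have hA : i.1 ∈ A \ C := Finset.mem_sdiff.mpr ⟨i.2, h⟩
      rw [glue_not_mem d p _ h, dif_neg h]
      simp only [hse1, seEquiv, Equiv.coe_fn_mk]
      rw [dif_pos hA]
  have argM : ∀ (p : SubIdx d C) (a : SubIdx d (A \ C)) (b : SubIdx d (B \ C))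
      (c : SubIdx d ((A ∪ B)ᶜ)),
      (fun i : ↥B => glue d C p (se1 (a, se2 (b, c))) i.1)
        = (fun i : ↥B => if h : i.1 ∈ C then p ⟨i.1, h⟩
            else b ⟨i.1, Finset.mem_sdiff.mpr ⟨i.2, h⟩⟩) := by
    intro p a b c
    funext i
    by_cases h : i.1 ∈ C
    · rw [glue_mem d p _ h, dif_pos h]
    · have hnA : i.1 ∉ A \ C := fun hc =>
        h (Finset.mem_inter.mpr ⟨(Finset.mem_sdiff.mp hc).1, i.2⟩)
      have hB : i.1 ∈ B \ C := Finset.mem_sdiff.mpr ⟨i.2, h⟩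
      rw [glue_not_mem d p _ h, dif_neg h]
      simp only [hse1, hse2, seEquiv, Equiv.coe_fn_mk]
      rw [dif_neg hnA, dif_pos hB]
  -- main computation
  rw [Matrix.trace, Matrix.trace]
  simp only [Matrix.diag_apply, Matrix.mul_apply]
  calc
    ∑ x : Idx d, ∑ y : Idx d, embed d A T x y * embed d B M y x
        = ∑ p : SubIdx d C, ∑ s : SubIdx d Cᶜ, ∑ q : SubIdx d C, ∑ t : SubIdx d Cᶜ,
            embed d A T (glue d C p s) (glue d C q t)
              * embed d B M (glue d C q t) (glue d C p s) := by
          rw [sum_glue d C]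
          exact Finset.sum_congr rfl fun p _ => Finset.sum_congr rfl fun s _ =>
            sum_glue d C _
    _ = ∑ p : SubIdx d C, ∑ s : SubIdx d Cᶜ, ∑ q : SubIdx d C,
            T (fun i : ↥A => glue d C p s i.1) (fun i : ↥A => glue d C q s i.1)
              * M (fun i : ↥B => glue d C q s i.1) (fun i : ↥B => glue d C p s i.1) := by
          refine Finset.sum_congr rfl fun p _ => Finset.sum_congr rfl fun s _ =>
            Finset.sum_congr rfl fun q _ => ?_
          simp only [key, Finset.sum_ite_eq, Finset.mem_univ, if_true]
    _ = ∑ p : SubIdx d C, ∑ q : SubIdx d C, ∑ s : SubIdx d Cᶜ,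
            T (fun i : ↥A => glue d C p s i.1) (fun i : ↥A => glue d C q s i.1)
              * M (fun i : ↥B => glue d C q s i.1) (fun i : ↥B => glue d C p s i.1) := by
          exact Finset.sum_congr rfl fun p _ => Finset.sum_comm
    _ = ∑ p : SubIdx d C, ∑ q : SubIdx d C, ∑ a : SubIdx d (A \ C),
          ∑ b : SubIdx d (B \ C), ∑ c : SubIdx d ((A ∪ B)ᶜ),
            T (fun i : ↥A => glue d C p (se1 (a, se2 (b, c))) i.1)
                (fun i : ↥A => glue d C q (se1 (a, se2 (b, c))) i.1)
              * M (fun i : ↥B => glue d C q (se1 (a, se2 (b, c))) i.1)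
                  (fun i : ↥B => glue d C p (se1 (a, se2 (b, c))) i.1) := by
          refine Finset.sum_congr rfl fun p _ => Finset.sum_congr rfl fun q _ => ?_
          rw [sum_se d h1PR h1QR h1cov h1dis]
          refine Finset.sum_congr rfl fun a _ => ?_
          rw [sum_se d h2PR h2QR h2cov h2dis]
    _ = ∑ p : SubIdx d C, ∑ q : SubIdx d C, ∑ a : SubIdx d (A \ C),
          ∑ b : SubIdx d (B \ C), ∑ _c : SubIdx d ((A ∪ B)ᶜ),
            T (fun i : ↥A => if h : i.1 ∈ C then p ⟨i.1, h⟩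
                else a ⟨i.1, Finset.mem_sdiff.mpr ⟨i.2, h⟩⟩)
              (fun i : ↥A => if h : i.1 ∈ C then q ⟨i.1, h⟩
                else a ⟨i.1, Finset.mem_sdiff.mpr ⟨i.2, h⟩⟩)
              * M (fun i : ↥B => if h : i.1 ∈ C then q ⟨i.1, h⟩
                    else b ⟨i.1, Finset.mem_sdiff.mpr ⟨i.2, h⟩⟩)
                  (fun i : ↥B => if h : i.1 ∈ C then p ⟨i.1, h⟩
                    else b ⟨i.1, Finset.mem_sdiff.mpr ⟨i.2, h⟩⟩) := by
          refine Finset.sum_congr rfl fun p _ => Finset.sum_congr rfl fun q _ =>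
            Finset.sum_congr rfl fun a _ => Finset.sum_congr rfl fun b _ =>
            Finset.sum_congr rfl fun c _ => ?_
          rw [argT p a b c, argT q a b c, argM q a b c, argM p a b c]
    _ = Qp d ((A ∪ B)ᶜ) * ∑ p : SubIdx d C, ∑ q : SubIdx d C,
          (∑ a : SubIdx d (A \ C),
            T (fun i : ↥A => if h : i.1 ∈ C then p ⟨i.1, h⟩
                else a ⟨i.1, Finset.mem_sdiff.mpr ⟨i.2, h⟩⟩)
              (fun i : ↥A => if h : i.1 ∈ C then q ⟨i.1, h⟩
                else a ⟨i.1, Finset.mem_sdiff.mpr ⟨i.2, h⟩⟩))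
          * (∑ b : SubIdx d (B \ C),
              M (fun i : ↥B => if h : i.1 ∈ C then q ⟨i.1, h⟩
                    else b ⟨i.1, Finset.mem_sdiff.mpr ⟨i.2, h⟩⟩)
                  (fun i : ↥B => if h : i.1 ∈ C then p ⟨i.1, h⟩
                    else b ⟨i.1, Finset.mem_sdiff.mpr ⟨i.2, h⟩⟩)) := by
          rw [Finset.mul_sum]
          refine Finset.sum_congr rfl fun p _ => ?_
          rw [Finset.mul_sum]
          refine Finset.sum_congr rfl fun q _ => ?_
          rw [Finset.sum_mul_sum, Finset.mul_sum]
          refine Finset.sum_congr rfl fun a _ => ?_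
          rw [Finset.mul_sum]
          refine Finset.sum_congr rfl fun b _ => ?_
          rw [Finset.sum_const, Finset.card_univ, nsmul_eq_mul, card_subIdx]
    _ = Qp d ((A ∪ B)ᶜ)
          * (reduceSub d A C T * reduceSub d B C M).trace := by
          rw [Matrix.trace]
          simp only [Matrix.diag_apply, Matrix.mul_apply, reduceSub]

end
end CompatProof
namespace CompatProof
open Compat Finset
variable {n : ℕ} (d : Fin n → ℕ)
noncomputable section

/-- the common reduced state on the factors in `A` -/
def sigA (σ : Tuple d) (f : Finset (Fin n) → Fin n) (A : Finset (Fin n)) :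
    Matrix (SubIdx d A) (SubIdx d A) ℂ :=
  reduceSub d ({f A}ᶜ) A (σ (f A))

lemma sigA_eq (σ : Tuple d) (hcons : HasConsistentTraces d σ)
    (f : Finset (Fin n) → Fin n) (hf : ∀ A : Finset (Fin n), A ≠ Finset.univ → f A ∉ A)
    {A : Finset (Fin n)} (hA : A ≠ Finset.univ) {j : Fin n} (hj : j ∉ A) :
    reduceSub d ({j}ᶜ) A (σ j) = sigA d σ f A := by
  have hi : f A ∉ A := hf A hA
  by_cases hij : f A = j
  · rw [sigA, hij]
  · have hsubi : A ⊆ {f A}ᶜ ∩ {j}ᶜ := by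
      intro k hk
      refine Finset.mem_inter.mpr ⟨Finset.mem_compl.mpr ?_, Finset.mem_compl.mpr ?_⟩
      · simp only [Finset.mem_singleton]
        rintro rfl
        exact hi hk
      · simp only [Finset.mem_singleton]
        rintro rfl
        exact hj hk
    have h1 : {f A}ᶜ ∩ {j}ᶜ ⊆ ({j}ᶜ : Finset (Fin n)) := Finset.inter_subset_right
    have h2 : {f A}ᶜ ∩ {j}ᶜ ⊆ ({f A}ᶜ : Finset (Fin n)) := Finset.inter_subset_left
    rw [sigA, ← reduceSub_comp d hsubi h1 (σ j), ← hcons (f A) j hij,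
      reduceSub_comp d hsubi h2 (σ (f A))]

lemma trace_nonneg_of_posSemidef {m : Type*} [Fintype m] [DecidableEq m]
    {M : Matrix m m ℂ} (h : M.PosSemidef) : 0 ≤ M.trace := by
  rw [Matrix.trace]
  refine Finset.sum_nonneg fun i _ => ?_
  simpa [dotProduct, Pi.single_apply, apply_ite] using h.dotProduct_mulVec_nonneg (Pi.single i 1)

lemma core (hn1 : 1 ≤ n) (σ : Tuple d) (hcons : HasConsistentTraces d σ)
    (f : Finset (Fin n) → Fin n) (hf : ∀ A : Finset (Fin n), A ≠ Finset.univ → f A ∉ A)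
    {A : Finset (Fin n)} (hA : A ≠ Finset.univ)
    (T : Matrix (SubIdx d A) (SubIdx d A) ℂ) :
    (embed d A T *
      ∑ B ∈ Finset.univ.filter (fun B : Finset (Fin n) => B ≠ Finset.univ),
        (((-1 : ℂ) ^ (n - 1 + B.card)) * Qp d B) • embed d B (sigA d σ f B)).trace
      = Qp d Finset.univ * (T * sigA d σ f A).trace := by
  set G : Finset (Fin n) → ℂ := fun B =>
    (((-1 : ℂ) ^ (n - 1 + B.card)) * Qp d B) *
      (Qp d ((A ∪ B)ᶜ) * (reduceSub d A (A ∩ B) T * sigA d σ f (A ∩ B)).trace) with hG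
  have hanb : ∀ B : Finset (Fin n), A ∩ B ≠ Finset.univ := by
    intro B hB
    exact hA (Finset.univ_subset_iff.mp (hB ▸ (Finset.inter_subset_left (s₂ := B))))
  have hstep1 : (embed d A T *
      ∑ B ∈ Finset.univ.filter (fun B : Finset (Fin n) => B ≠ Finset.univ),
        (((-1 : ℂ) ^ (n - 1 + B.card)) * Qp d B) • embed d B (sigA d σ f B)).trace
      = ∑ B ∈ Finset.univ.filter (fun B : Finset (Fin n) => B ≠ Finset.univ), G B := by
    rw [Matrix.mul_sum, Matrix.trace_sum]
    refine Finset.sum_congr rfl fun B hB => ?_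
    have hBne : B ≠ Finset.univ := (Finset.mem_filter.mp hB).2
    have hfB : f B ∉ B := hf B hBne
    have hBsub : B ⊆ ({f B}ᶜ : Finset (Fin n)) := by
      intro k hk
      refine Finset.mem_compl.mpr ?_
      simp only [Finset.mem_singleton]
      rintro rfl
      exact hfB hk
    have hred : reduceSub d B (A ∩ B) (sigA d σ f B) = sigA d σ f (A ∩ B) := by
      rw [sigA, reduceSub_comp d (Finset.inter_subset_right) hBsub]
      exact sigA_eq d σ hcons f hf (hanb B)
        (fun h => hfB (Finset.mem_inter.mp h).2)
    rw [Matrix.mul_smul, Matrix.trace_smul, smul_eq_mul, trace_embed_embed, hred, hG]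
  rw [hstep1, Finset.filter_ne' Finset.univ Finset.univ,
    Finset.sum_erase_eq_sub (Finset.mem_univ _)]
  have hzero : ∑ B : Finset (Fin n), G B = 0 := by
    have hre : ∑ B : Finset (Fin n), G B
        = ∑ P ∈ A.powerset ×ˢ (Aᶜ : Finset (Fin n)).powerset, G (P.1 ∪ P.2) := by
      refine Finset.sum_nbij' (fun B => (B ∩ A, B \ A)) (fun P => P.1 ∪ P.2) ?_ ?_ ?_ ?_ ?_
      · intro B _
        refine Finset.mem_product.mpr ⟨Finset.mem_powerset.mpr Finset.inter_subset_right,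
          Finset.mem_powerset.mpr ?_⟩
        intro k hk
        exact Finset.mem_compl.mpr (Finset.mem_sdiff.mp hk).2
      · intro P _
        exact Finset.mem_univ _
      · intro B _
        ext k
        simp only [Finset.mem_union, Finset.mem_inter, Finset.mem_sdiff]
        tauto
      · intro P hP
        obtain ⟨h1, h2⟩ := Finset.mem_product.mp hP
        have h1' : P.1 ⊆ A := Finset.mem_powerset.mp h1
        have h2' : P.2 ⊆ (Aᶜ : Finset (Fin n)) := Finset.mem_powerset.mp h2
        have e1 : (P.1 ∪ P.2) ∩ A = P.1 := by
          ext k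
          simp only [Finset.mem_inter, Finset.mem_union]
          constructor
          · rintro ⟨hk | hk, hkA⟩
            · exact hk
            · exact absurd hkA (Finset.mem_compl.mp (h2' hk))
          · intro hk
            exact ⟨Or.inl hk, h1' hk⟩
        have e2 : (P.1 ∪ P.2) \ A = P.2 := by
          ext k
          simp only [Finset.mem_sdiff, Finset.mem_union]
          constructor
          · rintro ⟨hk | hk, hkA⟩
            · exact absurd (h1' hk) hkA
            · exact hk
          · intro hk
            exact ⟨Or.inr hk, Finset.mem_compl.mp (h2' hk)⟩
        exact Prod.ext e1 e2
      · intro B _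
        have : (B ∩ A) ∪ (B \ A) = B := by
          ext k
          simp only [Finset.mem_union, Finset.mem_inter, Finset.mem_sdiff]
          tauto
        rw [this]
    rw [hre, Finset.sum_product]
    apply Finset.sum_eq_zero
    intro C hC
    have hCA : C ⊆ A := Finset.mem_powerset.mp hC
    have hval : ∀ B' ∈ (Aᶜ : Finset (Fin n)).powerset,
        G (C ∪ B') = ((-1 : ℂ)) ^ B'.card *
          ((((-1 : ℂ)) ^ (n - 1 + C.card) * Qp d C * Qp d (Aᶜ))
            * (reduceSub d A C T * sigA d σ f C).trace) := by
      intro B' hB'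
      have hB'c : B' ⊆ (Aᶜ : Finset (Fin n)) := Finset.mem_powerset.mp hB'
      have hdisj : Disjoint C B' := Finset.disjoint_left.mpr
        (fun {k} hk hk' => (Finset.mem_compl.mp (hB'c hk')) (hCA hk))
      have hIU : A ∩ (C ∪ B') = C := by
        ext k
        simp only [Finset.mem_inter, Finset.mem_union]
        constructor
        · rintro ⟨hkA, hk | hk⟩
          · exact hk
          · exact absurd hkA (Finset.mem_compl.mp (hB'c hk))
        · intro hk
          exact ⟨hCA hk, Or.inl hk⟩
      have hUC : (A ∪ (C ∪ B'))ᶜ = (A ∪ B')ᶜ := by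
        congr 1
        ext k
        simp only [Finset.mem_union]
        constructor
        · rintro (hk | hk | hk)
          · exact Or.inl hk
          · exact Or.inl (hCA hk)
          · exact Or.inr hk
        · rintro (hk | hk)
          · exact Or.inl hk
          · exact Or.inr (Or.inr hk)
      have hdisj2 : Disjoint ((A ∪ B')ᶜ : Finset (Fin n)) B' := Finset.disjoint_left.mpr
        (fun {k} hk hk' => (Finset.mem_compl.mp hk) (Finset.mem_union_right _ hk'))
      have hQsplit : Qp d (C ∪ B') = Qp d C * Qp d B' := by
        rw [Qp, Qp, Qp, Finset.prod_union hdisj]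
      have hQ2 : Qp d ((A ∪ B')ᶜ) * Qp d B' = Qp d (Aᶜ) := by
        rw [Qp, Qp, Qp, ← Finset.prod_union hdisj2]
        congr 1
        ext k
        simp only [Finset.mem_union, Finset.mem_compl, Finset.mem_union]
        constructor
        · rintro (hk | hk)
          · exact fun hkA => hk (Or.inl hkA)
          · exact Finset.mem_compl.mp (hB'c hk)
        · intro hk
          by_cases hkB : k ∈ B'
          · exact Or.inr hkB
          · exact Or.inl (fun hu => hu.elim hk hkB)
      have hcard : (C ∪ B').card = C.card + B'.card := Finset.card_union_of_disjoint hdisj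
      have hpow : ((-1 : ℂ)) ^ (n - 1 + (C.card + B'.card))
          = ((-1 : ℂ)) ^ (n - 1 + C.card) * ((-1 : ℂ)) ^ B'.card := by
        rw [← pow_add, Nat.add_assoc]
      rw [hG]
      simp only []
      rw [hIU, hUC, hcard, hQsplit, hpow, ← hQ2]
      ring
    rw [Finset.sum_congr rfl hval, ← Finset.sum_mul]
    have hAne : (Aᶜ : Finset (Fin n)).Nonempty := by
      rw [Finset.nonempty_iff_ne_empty]
      intro h
      apply hA
      have h2 := congrArg (fun s : Finset (Fin n) => sᶜ) h
      simpa using h2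
    have hz : ∑ m ∈ (Aᶜ : Finset (Fin n)).powerset, ((-1 : ℂ)) ^ m.card = 0 := by
      have hzz := Finset.sum_powerset_neg_one_pow_card_of_nonempty hAne
      calc ∑ m ∈ (Aᶜ : Finset (Fin n)).powerset, ((-1 : ℂ)) ^ m.card
          = ((∑ m ∈ (Aᶜ : Finset (Fin n)).powerset, ((-1 : ℤ)) ^ m.card : ℤ) : ℂ) := by
            push_cast
            rfl
        _ = 0 := by rw [hzz, Int.cast_zero]
    rw [hz, zero_mul]
  have hGuniv : G Finset.univ = - (Qp d Finset.univ * (T * sigA d σ f A).trace) := by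
    have hodd : Odd (n - 1 + (Finset.univ : Finset (Fin n)).card) := by
      rw [Finset.card_univ, Fintype.card_fin]
      exact ⟨n - 1, by omega⟩
    rw [hG]
    simp only []
    have h2 : ((A ∪ (Finset.univ : Finset (Fin n)))ᶜ : Finset (Fin n)) = ∅ := by simp
    rw [Finset.inter_univ, h2, hodd.neg_one_pow, reduceSub_self]
    have h1 : Qp d (∅ : Finset (Fin n)) = 1 := by rw [Qp, Finset.prod_empty]
    rw [h1]
    ring
  rw [hzero, hGuniv]
  ring

end
end CompatProof
open Matrix BigOperators
open scoped ComplexOrder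

/-- if `σ` is a consistent tuple of density states with `Δ(σ) ⪰ 0`
(where `σ_A` is the common reduced state, computed from `σ (f A)` for any choice
`f A ∉ A`), then `⟨⟨W,σ⟩⟩ ≥ 0` for every compatibility witness `W` of the form
`p(W) = Δ(Z)` with `Z ⪰ 0`. -/
theorem delta_nonneg_undetected {n : ℕ} (d : Fin n → ℕ) (hn : 2 ≤ n) (hd : ∀ i, 1 ≤ d i)
    (σ : Compat.Tuple d) (hden : ∀ i, Compat.IsDensity (σ i))
    (hcons : Compat.HasConsistentTraces d σ)
    (f : Finset (Fin n) → Fin n) (hf : ∀ A : Finset (Fin n), A ≠ Finset.univ → f A ∉ A)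
    (hpos : (∑ A ∈ Finset.univ.filter (fun A : Finset (Fin n) => A ≠ Finset.univ),
        ((-1 : ℂ) ^ A.card) •
          Compat.embed d A (Compat.reduceSub d ({f A}ᶜ) A (σ (f A)))).PosSemidef) :
    ∀ W : Compat.Tuple d, Compat.IsWitness d W →
      (∃ Z : Matrix (Compat.Idx d) (Compat.Idx d) ℂ, Z.PosSemidef ∧
        Compat.pW d W = Compat.Δop d Z) →
      0 ≤ Compat.cwip d W σ := by

  classical
  intro W hW hZe
  obtain ⟨Z, hZ, hpWZ⟩ := hZe
  have hn1 : 1 ≤ n := by omega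
  have hQne : CompatProof.Qp d Finset.univ ≠ 0 := by
    rw [CompatProof.Qp]
    apply Finset.prod_ne_zero_iff.mpr
    intro i _
    have := hd i
    exact Nat.cast_ne_zero.mpr (by omega)
  have hIc : ∀ i : Fin n, ({i}ᶜ : Finset (Fin n)) ≠ Finset.univ := by
    intro i h
    have h2 : i ∈ ({i}ᶜ : Finset (Fin n)) := h ▸ Finset.mem_univ i
    exact (Finset.mem_compl.mp h2) (Finset.mem_singleton_self i)
  have hsigI : ∀ i, CompatProof.sigA d σ f ({i}ᶜ) = σ i := by
    intro i
    have hfi : f ({i}ᶜ) = i := by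
      have h1 := hf _ (hIc i)
      have h2 : f ({i}ᶜ : Finset (Fin n)) ∈ ({i} : Finset (Fin n)) := by
        by_contra hc
        exact h1 (Finset.mem_compl.mpr hc)
      simpa using h2
    rw [CompatProof.sigA, hfi, CompatProof.reduceSub_self]
  have hmain : CompatProof.Qp d Finset.univ * (∑ i, (W i * σ i).trace)
      = CompatProof.Qp d Finset.univ *
          (Z * ∑ A ∈ Finset.univ.filter (fun A : Finset (Fin n) => A ≠ Finset.univ),
            ((-1 : ℂ) ^ A.card) • Compat.embed d A (CompatProof.sigA d σ f A)).trace := by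
    calc CompatProof.Qp d Finset.univ * (∑ i, (W i * σ i).trace)
        = ∑ i, (Compat.embed d ({i}ᶜ) (W i) *
            ∑ B ∈ Finset.univ.filter (fun B : Finset (Fin n) => B ≠ Finset.univ),
              (((-1 : ℂ) ^ (n - 1 + B.card)) * CompatProof.Qp d B) •
                Compat.embed d B (CompatProof.sigA d σ f B)).trace := by
          rw [Finset.mul_sum]
          refine Finset.sum_congr rfl fun i _ => ?_
          rw [CompatProof.core d hn1 σ hcons f hf (hIc i) (W i), hsigI i]
      _ = ((∑ i, Compat.embed d ({i}ᶜ) (W i)) *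
            ∑ B ∈ Finset.univ.filter (fun B : Finset (Fin n) => B ≠ Finset.univ),
              (((-1 : ℂ) ^ (n - 1 + B.card)) * CompatProof.Qp d B) •
                Compat.embed d B (CompatProof.sigA d σ f B)).trace := by
          rw [Matrix.sum_mul, Matrix.trace_sum]
      _ = (Compat.pW d W *
            ∑ B ∈ Finset.univ.filter (fun B : Finset (Fin n) => B ≠ Finset.univ),
              (((-1 : ℂ) ^ (n - 1 + B.card)) * CompatProof.Qp d B) •
                Compat.embed d B (CompatProof.sigA d σ f B)).trace := rfl
      _ = (Compat.Δop d Z *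
            ∑ B ∈ Finset.univ.filter (fun B : Finset (Fin n) => B ≠ Finset.univ),
              (((-1 : ℂ) ^ (n - 1 + B.card)) * CompatProof.Qp d B) •
                Compat.embed d B (CompatProof.sigA d σ f B)).trace := by
          rw [hpWZ]
      _ = ∑ A ∈ Finset.univ.filter (fun A : Finset (Fin n) => A ≠ Finset.univ),
            ((-1 : ℂ) ^ A.card) * (Compat.embed d A (Compat.reduce d A Z) *
              ∑ B ∈ Finset.univ.filter (fun B : Finset (Fin n) => B ≠ Finset.univ),
                (((-1 : ℂ) ^ (n - 1 + B.card)) * CompatProof.Qp d B) •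
                  Compat.embed d B (CompatProof.sigA d σ f B)).trace := by
          rw [Compat.Δop, Matrix.sum_mul, Matrix.trace_sum]
          refine Finset.sum_congr rfl fun A _ => ?_
          rw [Matrix.smul_mul, Matrix.trace_smul, smul_eq_mul]
      _ = ∑ A ∈ Finset.univ.filter (fun A : Finset (Fin n) => A ≠ Finset.univ),
            ((-1 : ℂ) ^ A.card) * (CompatProof.Qp d Finset.univ *
              ((Compat.reduce d A Z) * CompatProof.sigA d σ f A).trace) := by
          refine Finset.sum_congr rfl fun A hA => ?_
          rw [CompatProof.core d hn1 σ hcons f hf (Finset.mem_filter.mp hA).2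
            (Compat.reduce d A Z)]
      _ = CompatProof.Qp d Finset.univ *
            ∑ A ∈ Finset.univ.filter (fun A : Finset (Fin n) => A ≠ Finset.univ),
              ((-1 : ℂ) ^ A.card) *
                ((Compat.reduce d A Z) * CompatProof.sigA d σ f A).trace := by
          rw [Finset.mul_sum]
          refine Finset.sum_congr rfl fun A _ => ?_
          ring
      _ = CompatProof.Qp d Finset.univ *
          (Z * ∑ A ∈ Finset.univ.filter (fun A : Finset (Fin n) => A ≠ Finset.univ),
            ((-1 : ℂ) ^ A.card) • Compat.embed d A (CompatProof.sigA d σ f A)).trace := by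
          congr 1
          rw [Matrix.mul_sum, Matrix.trace_sum]
          refine Finset.sum_congr rfl fun A _ => ?_
          rw [Matrix.mul_smul, Matrix.trace_smul, smul_eq_mul]
          congr 1
          rw [Matrix.trace_mul_comm Z (Compat.embed d A (CompatProof.sigA d σ f A)),
            CompatProof.trace_embed_mul,
            Matrix.trace_mul_comm (CompatProof.sigA d σ f A) (Compat.reduce d A Z)]
  have hsum : (∑ i, (W i * σ i).trace)
      = (Z * ∑ A ∈ Finset.univ.filter (fun A : Finset (Fin n) => A ≠ Finset.univ),
          ((-1 : ℂ) ^ A.card) • Compat.embed d A (CompatProof.sigA d σ f A)).trace :=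
    mul_left_cancel₀ hQne hmain
  have hDpos : (∑ A ∈ Finset.univ.filter (fun A : Finset (Fin n) => A ≠ Finset.univ),
      ((-1 : ℂ) ^ A.card) • Compat.embed d A (CompatProof.sigA d σ f A)).PosSemidef := hpos
  obtain ⟨Bm, hBm⟩ : ∃ Bm : Matrix (Compat.Idx d) (Compat.Idx d) ℂ, Z = Bmᴴ * Bm := by
    open scoped MatrixOrder in
    obtain ⟨X, hX, -, hXZ⟩ :=
      sub_zero Z ▸ CFC.exists_sqrt_of_isSelfAdjoint_of_quasispectrumRestricts hZ.isHermitian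
        (QuasispectrumRestricts.nnreal_of_nonneg hZ.nonneg)
    exact ⟨X, by rw [sub_zero] at hXZ; rw [← hXZ, show Xᴴ = X from hX.star_eq]⟩
  have htr : (0 : ℂ) ≤ (Z * ∑ A ∈ Finset.univ.filter
      (fun A : Finset (Fin n) => A ≠ Finset.univ),
      ((-1 : ℂ) ^ A.card) • Compat.embed d A (CompatProof.sigA d σ f A)).trace := by
    have hps := hDpos.mul_mul_conjTranspose_same Bm
    have h2 := CompatProof.trace_nonneg_of_posSemidef hps
    have h3 : (Z * ∑ A ∈ Finset.univ.filter (fun A : Finset (Fin n) => A ≠ Finset.univ),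
        ((-1 : ℂ) ^ A.card) • Compat.embed d A (CompatProof.sigA d σ f A)).trace
        = (Bm * (∑ A ∈ Finset.univ.filter (fun A : Finset (Fin n) => A ≠ Finset.univ),
            ((-1 : ℂ) ^ A.card) • Compat.embed d A (CompatProof.sigA d σ f A)) * Bmᴴ).trace := by
      rw [hBm, Matrix.mul_assoc, Matrix.trace_mul_comm, Matrix.mul_assoc]
    rw [h3]
    exact h2
  rw [Compat.cwip, hsum]
  have h4 := (Complex.le_def.mp htr).1
  simpa using h4
end

section
/- Let H = ℂ² ⊗ ℂ² ⊗ ℂ² (three qubits), let |Ψ₊⟩ = (|00⟩ + |11⟩)/√2 and π = |Ψ₊⟩⟨Ψ₊| on ℂ² ⊗ ℂ², and let σ = (1/4)·|1⟩⟨1| ⊗ 1 ⊗ 1, a density state on H. For k = 1, 2, 3 set ρ^(k) = (3/4)·Tr_k σ + (1/4)·π, a two-qubit density state regarded as the state of the pair of qubits other than k (so ρ^(1) lives on qubits 2,3; ρ^(2) on qubits 1,3; ρ^(3) on qubits 1,2). Then: (a) there is no density state ρ on H with Tr_k ρ = ρ^(k) for k = 1, 2, 3; and (b) writing ρ_1 for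 the partial trace of ρ^(3) over its second factor, ρ_2 for the partial trace of ρ^(3) over its first factor, and ρ_3 for the partial trace of ρ^(1) over its first factor, the operator Δ = 1⊗1⊗1 − ρ_1⊗1⊗1 − 1⊗ρ_2⊗1 − 1⊗1⊗ρ_3 + ρ^(3)⊗1 + S_{13}(ρ^(2)) + 1⊗ρ^(1) on H, where S_{13}(ρ^(2)) denotes ρ^(2) placed on qubits 1 and 3 with the identity on qubit 2, satisfies 0 ⪯ Δ ⪯ 1. Hence the condition 0 ⪯ Δ ⪯ 1 is necessary but not sufficient for three-qubit subsystem compatibility, disproving the conjecture of Butterley, Sudbery and Szulc. -/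
open Matrix
open scoped Kronecker ComplexOrder

namespace BSS

noncomputable section

/-- Single-qubit index. -/
abbrev Q := Fin 2
/-- Two-qubit index. -/
abbrev H2 := Q × Q
/-- Three-qubit index, `H = ℂ² ⊗ ℂ² ⊗ ℂ²`. -/
abbrev H3 := (Q × Q) × Q

/-- `|Ψ₊⟩ = (|00⟩ + |11⟩)/√2`. -/
def psiPlus : H2 → ℂ := fun p => if p.1 = p.2 then ((1 / Real.sqrt 2 : ℝ) : ℂ) else 0

/-- `π = |Ψ₊⟩⟨Ψ₊|`. -/
def piPlus : Matrix H2 H2 ℂ := fun p q => psiPlus p * (starRingEnd ℂ) (psiPlus q)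

/-- `|1⟩⟨1|` on one qubit. -/
def e11 : Matrix Q Q ℂ := fun a b => if a = 1 ∧ b = 1 then 1 else 0

/-- `σ = (1/4) |1⟩⟨1| ⊗ 1 ⊗ 1`. -/
def sigma : Matrix H3 H3 ℂ :=
  (1 / 4 : ℂ) • ((e11 ⊗ₖ (1 : Matrix Q Q ℂ)) ⊗ₖ (1 : Matrix Q Q ℂ))

/-- Partial trace over qubit 1 (result on qubits 2,3). -/
def ptr1 (M : Matrix H3 H3 ℂ) : Matrix H2 H2 ℂ :=
  fun p q => ∑ a : Q, M ((a, p.1), p.2) ((a, q.1), q.2)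

/-- Partial trace over qubit 2 (result on qubits 1,3). -/
def ptr2 (M : Matrix H3 H3 ℂ) : Matrix H2 H2 ℂ :=
  fun p q => ∑ a : Q, M ((p.1, a), p.2) ((q.1, a), q.2)

/-- Partial trace over qubit 3 (result on qubits 1,2). -/
def ptr3 (M : Matrix H3 H3 ℂ) : Matrix H2 H2 ℂ :=
  fun p q => ∑ a : Q, M ((p.1, p.2), a) ((q.1, q.2), a)

/-- `ρ^(1) = (3/4)·Tr₁ σ + (1/4)·π`, a state of qubits 2,3. -/
def rho1 : Matrix H2 H2 ℂ := (3 / 4 : ℂ) • ptr1 sigma + (1 / 4 : ℂ) • piPlus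
/-- `ρ^(2) = (3/4)·Tr₂ σ + (1/4)·π`, a state of qubits 1,3. -/
def rho2 : Matrix H2 H2 ℂ := (3 / 4 : ℂ) • ptr2 sigma + (1 / 4 : ℂ) • piPlus
/-- `ρ^(3) = (3/4)·Tr₃ σ + (1/4)·π`, a state of qubits 1,2. -/
def rho3 : Matrix H2 H2 ℂ := (3 / 4 : ℂ) • ptr3 sigma + (1 / 4 : ℂ) • piPlus

/-- Partial trace of a two-qubit operator over its second factor. -/
def ptrSnd (M : Matrix H2 H2 ℂ) : Matrix Q Q ℂ := fun a b => ∑ c : Q, M (a, c) (b, c)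
/-- Partial trace of a two-qubit operator over its first factor. -/
def ptrFst (M : Matrix H2 H2 ℂ) : Matrix Q Q ℂ := fun a b => ∑ c : Q, M (c, a) (c, b)

/-- `ρ_1`: the state of qubit 1, obtained from `ρ^(3)` by tracing its second factor. -/
def r1 : Matrix Q Q ℂ := ptrSnd rho3
/-- `ρ_2`: the state of qubit 2, obtained from `ρ^(3)` by tracing its first factor. -/
def r2 : Matrix Q Q ℂ := ptrFst rho3
/-- `ρ_3`: the state of qubit 3, obtained from `ρ^(1)` by tracing its first factor. -/
def r3 : Matrix Q Q ℂ := ptrFst rho1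

/-- `S₁₃(M)`: place a two-qubit operator on qubits 1 and 3, identity on qubit 2. -/
def on13 (M : Matrix H2 H2 ℂ) : Matrix H3 H3 ℂ :=
  fun p q => M (p.1.1, p.2) (q.1.1, q.2) * (if p.1.2 = q.1.2 then 1 else 0)

/-- `1 ⊗ M`: place a two-qubit operator on qubits 2 and 3, identity on qubit 1. -/
def on23 (M : Matrix H2 H2 ℂ) : Matrix H3 H3 ℂ :=
  fun p q => (if p.1.1 = q.1.1 then 1 else 0) * M (p.1.2, p.2) (q.1.2, q.2)

/-- `Δ = 1 − ρ₁⊗1⊗1 − 1⊗ρ₂⊗1 − 1⊗1⊗ρ₃ + ρ^(3)⊗1 + S₁₃(ρ^(2)) + 1⊗ρ^(1)`. -/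
def Δ : Matrix H3 H3 ℂ :=
  1 - (r1 ⊗ₖ (1 : Matrix Q Q ℂ)) ⊗ₖ (1 : Matrix Q Q ℂ)
    - ((1 : Matrix Q Q ℂ) ⊗ₖ r2) ⊗ₖ (1 : Matrix Q Q ℂ)
    - ((1 : Matrix Q Q ℂ) ⊗ₖ (1 : Matrix Q Q ℂ)) ⊗ₖ r3
    + rho3 ⊗ₖ (1 : Matrix Q Q ℂ) + on13 rho2 + on23 rho1

/-- A density state: positive semidefinite with trace one. -/
def IsDensity {m : Type*} [Fintype m] (M : Matrix m m ℂ) : Prop :=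
  M.PosSemidef ∧ M.trace = 1
lemma piPlus_apply (p q : H2) :
    piPlus p q = if p.1 = p.2 ∧ q.1 = q.2 then (1/2 : ℂ) else 0 := by
  have h2 : (Real.sqrt 2) * (Real.sqrt 2) = 2 := Real.mul_self_sqrt (by norm_num)
  unfold piPlus psiPlus
  by_cases h1 : p.1 = p.2 <;> by_cases hq : q.1 = q.2 <;>
    simp [h1, hq, Complex.conj_ofReal, ← Complex.ofReal_mul]
  rw [← mul_inv, ← Complex.ofReal_mul, h2]
  norm_num

lemma diag_nonneg {m : Type*} [Fintype m] [DecidableEq m] {M : Matrix m m ℂ}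
    (h : M.PosSemidef) (i : m) : 0 ≤ M i i := by
  simpa [dotProduct, mulVec, Pi.single_apply] using h.dotProduct_mulVec_nonneg (Pi.single i 1)

lemma col_eq_zero {m : Type*} [Fintype m] [DecidableEq m] {M : Matrix m m ℂ}
    (h : M.PosSemidef) {i : m} (hi : M i i = 0) (j : m) : M j i = 0 := by
  have h0 : star (Pi.single i 1 : m → ℂ) ⬝ᵥ M *ᵥ (Pi.single i 1) = 0 := by
    simpa [dotProduct, mulVec, Pi.single_apply] using hi
  have hz := (h.dotProduct_mulVec_zero_iff (Pi.single i 1)).mp h0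
  simpa [mulVec, Pi.single_apply] using congr_fun hz j

lemma row_eq_zero {m : Type*} [Fintype m] [DecidableEq m] {M : Matrix m m ℂ}
    (h : M.PosSemidef) {i : m} (hi : M i i = 0) (j : m) : M i j = 0 := by
  rw [← h.1.apply i j, col_eq_zero h hi j, star_zero]

lemma herm_smul {m : Type*} [Fintype m] {c : ℂ} (hc : star c = c)
    {M : Matrix m m ℂ} (h : M.IsHermitian) : (c • M).IsHermitian := by
  have hc' : IsSelfAdjoint c := hc
  exact hc'.smul h.isSelfAdjoint

lemma herm_kron {m n : Type*} [Fintype m] [Fintype n]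
    {A : Matrix m m ℂ} {B : Matrix n n ℂ} (hA : A.IsHermitian) (hB : B.IsHermitian) :
    (A ⊗ₖ B).IsHermitian :=
  Matrix.IsHermitian.ext fun p q => by
    simp [Matrix.kroneckerMap_apply, star_mul', hA.apply, hB.apply]

lemma herm_piPlus : piPlus.IsHermitian :=
  Matrix.IsHermitian.ext fun p q => by
    by_cases h1 : p.1 = p.2 <;> by_cases h2 : q.1 = q.2 <;>
      simp [piPlus_apply, h1, h2] <;> norm_num

lemma herm_e11 : e11.IsHermitian :=
  Matrix.IsHermitian.ext fun p q => by fin_cases p <;> fin_cases q <;> simp [e11]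

lemma herm_sigma : sigma.IsHermitian :=
  herm_smul (by norm_num) (herm_kron (herm_kron herm_e11 Matrix.isHermitian_one)
    Matrix.isHermitian_one)

lemma herm_ptr1 {M : Matrix H3 H3 ℂ} (h : M.IsHermitian) : (ptr1 M).IsHermitian :=
  Matrix.IsHermitian.ext fun p q => by
    simp only [ptr1, star_sum]
    exact Finset.sum_congr rfl fun a _ => h.apply _ _

lemma herm_ptr2 {M : Matrix H3 H3 ℂ} (h : M.IsHermitian) : (ptr2 M).IsHermitian :=
  Matrix.IsHermitian.ext fun p q => by
    simp only [ptr2, star_sum]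
    exact Finset.sum_congr rfl fun a _ => h.apply _ _

lemma herm_ptr3 {M : Matrix H3 H3 ℂ} (h : M.IsHermitian) : (ptr3 M).IsHermitian :=
  Matrix.IsHermitian.ext fun p q => by
    simp only [ptr3, star_sum]
    exact Finset.sum_congr rfl fun a _ => h.apply _ _

lemma herm_ptrSnd {M : Matrix H2 H2 ℂ} (h : M.IsHermitian) : (ptrSnd M).IsHermitian :=
  Matrix.IsHermitian.ext fun p q => by
    simp only [ptrSnd, star_sum]
    exact Finset.sum_congr rfl fun a _ => h.apply _ _

lemma herm_ptrFst {M : Matrix H2 H2 ℂ} (h : M.IsHermitian) : (ptrFst M).IsHermitian :=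
  Matrix.IsHermitian.ext fun p q => by
    simp only [ptrFst, star_sum]
    exact Finset.sum_congr rfl fun a _ => h.apply _ _

lemma herm_rho1 : rho1.IsHermitian :=
  (herm_smul (by norm_num) (herm_ptr1 herm_sigma)).add (herm_smul (by norm_num) herm_piPlus)

lemma herm_rho2 : rho2.IsHermitian :=
  (herm_smul (by norm_num) (herm_ptr2 herm_sigma)).add (herm_smul (by norm_num) herm_piPlus)

lemma herm_rho3 : rho3.IsHermitian :=
  (herm_smul (by norm_num) (herm_ptr3 herm_sigma)).add (herm_smul (by norm_num) herm_piPlus)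

lemma herm_on13 {M : Matrix H2 H2 ℂ} (h : M.IsHermitian) : (on13 M).IsHermitian :=
  Matrix.IsHermitian.ext fun p q => by
    by_cases hb : p.1.2 = q.1.2
    · simp [on13, hb, star_mul', h.apply]
    · simp [on13, hb, Ne.symm hb]

lemma herm_on23 {M : Matrix H2 H2 ℂ} (h : M.IsHermitian) : (on23 M).IsHermitian :=
  Matrix.IsHermitian.ext fun p q => by
    by_cases hb : p.1.1 = q.1.1
    · simp [on23, hb, star_mul', h.apply]
    · simp [on23, hb, Ne.symm hb]

lemma herm_Delta : Δ.IsHermitian := by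
  unfold Δ
  exact (((((Matrix.isHermitian_one.sub
    (herm_kron (herm_kron (herm_ptrSnd herm_rho3) Matrix.isHermitian_one)
      Matrix.isHermitian_one)).sub
    (herm_kron (herm_kron Matrix.isHermitian_one (herm_ptrFst herm_rho3))
      Matrix.isHermitian_one)).sub
    (herm_kron (herm_kron Matrix.isHermitian_one Matrix.isHermitian_one)
      (herm_ptrFst herm_rho1))).add
    (herm_kron herm_rho3 Matrix.isHermitian_one)).add
    (herm_on13 herm_rho2)).add
    (herm_on23 herm_rho1)

lemma nonneg_term (c : ℂ) (hc : 0 ≤ c) (l : ℂ) : 0 ≤ c * star l * l := by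
  rw [mul_assoc]
  exact mul_nonneg hc (star_mul_self_nonneg l)

set_option maxHeartbeats 4000000 in
lemma quadDelta (x : H3 → ℂ) : star x ⬝ᵥ Δ *ᵥ x =
    (7/16 : ℂ) * star (x ((0,0),0) + (2/7) * x ((0,1),1) + (2/7) * x ((1,0),1) + (2/7) * x ((1,1),0)) * (x ((0,0),0) + (2/7) * x ((0,1),1) + (2/7) * x ((1,0),1) + (2/7) * x ((1,1),0))
      + (3/16 : ℂ) * star (x ((0,0),1) + (2/3) * x ((1,1),1)) * (x ((0,0),1) + (2/3) * x ((1,1),1))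
      + (3/16 : ℂ) * star (x ((0,1),0) + (2/3) * x ((1,1),1)) * (x ((0,1),0) + (2/3) * x ((1,1),1))
      + (17/112 : ℂ) * star (x ((0,1),1) + (-(4/17)) * x ((1,0),1) + (-(4/17)) * x ((1,1),0)) * (x ((0,1),1) + (-(4/17)) * x ((1,0),1) + (-(4/17)) * x ((1,1),0))
      + (3/16 : ℂ) * star (x ((1,0),0) + (2/3) * x ((1,1),1)) * (x ((1,0),0) + (2/3) * x ((1,1),1))
      + (39/272 : ℂ) * star (x ((1,0),1) + (-(4/13)) * x ((1,1),0)) * (x ((1,0),1) + (-(4/13)) * x ((1,1),0))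
      + (27/208 : ℂ) * star (x ((1,1),0)) * (x ((1,1),0))
      + (3/16 : ℂ) * star (x ((1,1),1)) * (x ((1,1),1)) := by
  simp only [dotProduct, mulVec, Δ, rho1, rho2, rho3, r1, r2, r3, ptr1, ptr2, ptr3,
    ptrSnd, ptrFst, sigma, piPlus_apply, e11, on13, on23, Matrix.kroneckerMap_apply,
    Matrix.one_apply, Matrix.sub_apply, Matrix.add_apply, Matrix.smul_apply, smul_eq_mul,
    Fintype.sum_prod_type, Fin.sum_univ_two, Pi.star_apply]
  norm_num [Prod.mk.injEq, -Prod.mk_zero_zero, -Prod.mk_one_one, Fin.zero_eq_one_iff,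
    Fin.one_eq_zero_iff]
  ring

set_option maxHeartbeats 4000000 in
lemma quadOneSub (x : H3 → ℂ) : star x ⬝ᵥ (1 - Δ) *ᵥ x =
    (9/16 : ℂ) * star (x ((0,0),0) + (-(2/9)) * x ((0,1),1) + (-(2/9)) * x ((1,0),1) + (-(2/9)) * x ((1,1),0)) * (x ((0,0),0) + (-(2/9)) * x ((0,1),1) + (-(2/9)) * x ((1,0),1) + (-(2/9)) * x ((1,1),0))
      + (13/16 : ℂ) * star (x ((0,0),1) + (-(2/13)) * x ((1,1),1)) * (x ((0,0),1) + (-(2/13)) * x ((1,1),1))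
      + (13/16 : ℂ) * star (x ((0,1),0) + (-(2/13)) * x ((1,1),1)) * (x ((0,1),0) + (-(2/13)) * x ((1,1),1))
      + (113/144 : ℂ) * star (x ((0,1),1) + (-(4/113)) * x ((1,0),1) + (-(4/113)) * x ((1,1),0)) * (x ((0,1),1) + (-(4/113)) * x ((1,0),1) + (-(4/113)) * x ((1,1),0))
      + (13/16 : ℂ) * star (x ((1,0),0) + (-(2/13)) * x ((1,1),1)) * (x ((1,0),0) + (-(2/13)) * x ((1,1),1))
      + (1417/1808 : ℂ) * star (x ((1,0),1) + (-(4/109)) * x ((1,1),0)) * (x ((1,0),1) + (-(4/109)) * x ((1,1),0))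
      + (1365/1744 : ℂ) * star (x ((1,1),0)) * (x ((1,1),0))
      + (105/208 : ℂ) * star (x ((1,1),1)) * (x ((1,1),1)) := by
  simp only [dotProduct, mulVec, Δ, rho1, rho2, rho3, r1, r2, r3, ptr1, ptr2, ptr3,
    ptrSnd, ptrFst, sigma, piPlus_apply, e11, on13, on23, Matrix.kroneckerMap_apply,
    Matrix.one_apply, Matrix.sub_apply, Matrix.add_apply, Matrix.smul_apply, smul_eq_mul,
    Fintype.sum_prod_type, Fin.sum_univ_two, Pi.star_apply]
  norm_num [Prod.mk.injEq, -Prod.mk_zero_zero, -Prod.mk_one_one, Fin.zero_eq_one_iff,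
    Fin.one_eq_zero_iff]
  ring

/-- (a) no three-qubit density state has `ρ^(1), ρ^(2), ρ^(3)` as its
two-qubit reduced states, yet (b) `0 ⪯ Δ ⪯ 1`; hence `0 ⪯ Δ ⪯ 1` is necessary but not
sufficient for three-qubit subsystem compatibility, disproving the conjecture of
Butterley, Sudbery and Szulc. -/
theorem bss_counterexample :
    (¬ ∃ ρ : Matrix H3 H3 ℂ, IsDensity ρ ∧ ptr1 ρ = rho1 ∧ ptr2 ρ = rho2 ∧ ptr3 ρ = rho3) ∧
    Δ.PosSemidef ∧ (1 - Δ).PosSemidef := by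
  refine ⟨?_, .of_dotProduct_mulVec_nonneg herm_Delta fun x => ?_,
    .of_dotProduct_mulVec_nonneg (Matrix.isHermitian_one.sub herm_Delta) fun x => ?_⟩
  · rintro ⟨ρ, ⟨hpsd, -⟩, h1, h2, h3⟩
    -- diagonal vanishing
    have E1 := congr_fun (congr_fun h3 ((0:Q),(1:Q))) ((0:Q),(1:Q))
    have E2 := congr_fun (congr_fun h2 ((0:Q),(1:Q))) ((0:Q),(1:Q))
    simp only [ptr3, ptr2, rho3, rho2, sigma, e11, piPlus_apply, Fin.sum_univ_two,
      Matrix.kroneckerMap_apply, Matrix.one_apply, Matrix.add_apply, Matrix.smul_apply,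
      smul_eq_mul] at E1 E2
    norm_num [-Prod.mk_zero_zero, -Prod.mk_one_one] at E1 E2
    have n010 := diag_nonneg hpsd (((0:Q),(1:Q)),(0:Q))
    have n011 := diag_nonneg hpsd (((0:Q),(1:Q)),(1:Q))
    have n001 := diag_nonneg hpsd (((0:Q),(0:Q)),(1:Q))
    have d010 : ρ (((0:Q),(1:Q)),(0:Q)) (((0:Q),(1:Q)),(0:Q)) = 0 := by
      rcases (add_eq_zero_iff_of_nonneg n010 n011).mp E1 with ⟨h, -⟩
      exact h
    have d001 : ρ (((0:Q),(0:Q)),(1:Q)) (((0:Q),(0:Q)),(1:Q)) = 0 := by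
      rcases (add_eq_zero_iff_of_nonneg n001 n011).mp E2 with ⟨h, -⟩
      exact h
    -- vanishing entries in rows 001 and 010
    have z1 : ρ (((0:Q),(0:Q)),(1:Q)) (((1:Q),(1:Q)),(1:Q)) = 0 := row_eq_zero hpsd d001 _
    have z2 : ρ (((0:Q),(1:Q)),(0:Q)) (((1:Q),(1:Q)),(1:Q)) = 0 := row_eq_zero hpsd d010 _
    have z3 : ρ (((0:Q),(1:Q)),(0:Q)) (((0:Q),(0:Q)),(1:Q)) = 0 := row_eq_zero hpsd d010 _
    -- entry equations
    have F1 := congr_fun (congr_fun h3 ((0:Q),(0:Q))) ((0:Q),(0:Q))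
    have F2 := congr_fun (congr_fun h1 ((1:Q),(0:Q))) ((1:Q),(0:Q))
    have F3 := congr_fun (congr_fun h1 ((0:Q),(1:Q))) ((0:Q),(1:Q))
    have F4 := congr_fun (congr_fun h3 ((0:Q),(0:Q))) ((1:Q),(1:Q))
    have F5 := congr_fun (congr_fun h2 ((0:Q),(0:Q))) ((1:Q),(1:Q))
    have F6 := congr_fun (congr_fun h1 ((1:Q),(0:Q))) ((0:Q),(1:Q))
    simp only [ptr1, ptr2, ptr3, rho1, rho2, rho3, sigma, e11, piPlus_apply, Fin.sum_univ_two,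
      Matrix.kroneckerMap_apply, Matrix.one_apply, Matrix.add_apply, Matrix.smul_apply,
      smul_eq_mul] at F1 F2 F3 F4 F5 F6
    norm_num [-Prod.mk_zero_zero, -Prod.mk_one_one] at F1 F2 F3 F4 F5 F6
    have g000 : ρ (((0:Q),(0:Q)),(0:Q)) (((0:Q),(0:Q)),(0:Q)) = 1/8 := by
      linear_combination F1 - d001
    have g110 : ρ (((1:Q),(1:Q)),(0:Q)) (((1:Q),(1:Q)),(0:Q)) = 3/16 := by
      linear_combination F2 - d010
    have g101 : ρ (((1:Q),(0:Q)),(1:Q)) (((1:Q),(0:Q)),(1:Q)) = 3/16 := by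
      linear_combination F3 - d001
    have g4 : ρ (((0:Q),(0:Q)),(0:Q)) (((1:Q),(1:Q)),(0:Q)) = 1/8 := by
      linear_combination F4 - z1
    have g5 : ρ (((0:Q),(0:Q)),(0:Q)) (((1:Q),(0:Q)),(1:Q)) = 1/8 := by
      linear_combination F5 - z2
    have g6 : ρ (((1:Q),(1:Q)),(0:Q)) (((1:Q),(0:Q)),(1:Q)) = 0 := by
      linear_combination F6 - z3
    -- hermitian mirror entries
    have g4' : ρ (((1:Q),(1:Q)),(0:Q)) (((0:Q),(0:Q)),(0:Q)) = 1/8 := by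
      have := hpsd.1.apply (((1:Q),(1:Q)),(0:Q)) (((0:Q),(0:Q)),(0:Q))
      rw [← this, g4]; norm_num
    have g5' : ρ (((1:Q),(0:Q)),(1:Q)) (((0:Q),(0:Q)),(0:Q)) = 1/8 := by
      have := hpsd.1.apply (((1:Q),(0:Q)),(1:Q)) (((0:Q),(0:Q)),(0:Q))
      rw [← this, g5]; norm_num
    have g6' : ρ (((1:Q),(0:Q)),(1:Q)) (((1:Q),(1:Q)),(0:Q)) = 0 := by
      have := hpsd.1.apply (((1:Q),(0:Q)),(1:Q)) (((1:Q),(1:Q)),(0:Q))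
      rw [← this, g6]; norm_num
    -- the test vector
    set x : H3 → ℂ := fun p =>
      if p = (((0:Q),(0:Q)),(0:Q)) then -3
      else if p = (((1:Q),(1:Q)),(0:Q)) then 2
      else if p = (((1:Q),(0:Q)),(1:Q)) then 2 else 0 with hxdef
    have hx := hpsd.dotProduct_mulVec_nonneg x
    have hval : star x ⬝ᵥ ρ *ᵥ x = -(3/8) := by
      simp only [hxdef, dotProduct, mulVec, Fintype.sum_prod_type, Fin.sum_univ_two,
        Pi.star_apply]
      norm_num [Prod.mk.injEq, -Prod.mk_zero_zero, -Prod.mk_one_one]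
      linear_combination 9*g000 + 4*g110 + 4*g101 - 6*g4 - 6*g4' - 6*g5 - 6*g5' + 4*g6 + 4*g6'
    rw [hval] at hx
    norm_num [Complex.le_def] at hx
  · rw [quadDelta]
    refine add_nonneg (add_nonneg (add_nonneg (add_nonneg (add_nonneg (add_nonneg
      (add_nonneg ?_ ?_) ?_) ?_) ?_) ?_) ?_) ?_ <;>
      exact nonneg_term _ (by norm_num [Complex.le_def]) _
  · rw [quadOneSub]
    refine add_nonneg (add_nonneg (add_nonneg (add_nonneg (add_nonneg (add_nonneg
      (add_nonneg ?_ ?_) ?_) ?_) ?_) ?_) ?_) ?_ <;>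
      exact nonneg_term _ (by norm_num [Complex.le_def]) _

end
end BSS
end
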